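/- arXiv:1202.0322 — 10 statements merged into one kernel-verified Lean document; each statement's English description precedes it below -/
import Mathlib

section
/- Let ρ be a positive semidefinite d×d complex matrix and σ a positive definite d×d complex matrix. Then for every s ∈ (0,1], Tr[(σ^{-s/4} ρ^{(1+s)/2} σ^{-s/4})²] ≤ Tr[σ^{-s/2} ρ^{1+s} σ^{-s/2}]. (Equivalently, ψ̲(s|ρ‖σ) := log Tr[ρ^{(1+s)/2}σ^{-s/2}ρ^{(1+s)/2}σ^{-s/2}] is at most ψ(s|ρ‖σ) := log Tr[ρ^{1+s}σ^{-s}].) -/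
open scoped BigOperators ComplexOrder

/-- Matrix power of a Hermitian matrix, obtained by applying `t ↦ t ^ r`
(real power) to the eigenvalues; junk value `0` for non-Hermitian input. -/
noncomputable def mpow {d : ℕ} (A : Matrix (Fin d) (Fin d) ℂ) (r : ℝ) :
    Matrix (Fin d) (Fin d) ℂ :=
  if hA : A.IsHermitian then
    (hA.eigenvectorUnitary : Matrix (Fin d) (Fin d) ℂ) *
      Matrix.diagonal (fun i => ((hA.eigenvalues i ^ r : ℝ) : ℂ)) *
      star (hA.eigenvectorUnitary : Matrix (Fin d) (Fin d) ℂ)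
  else 0

/-!
Put `A = ρ^((1+s)/2)`, `B = σ^(-s/4)` and `X = A B²`. By cyclicity of the trace the left side is
`Re Tr (X X)` and the right side is `Tr (X Xᴴ)`; their difference is `½ Tr (Y Yᴴ) ≥ 0` for the
skew-Hermitian `Y = X - Xᴴ`.
-/

open Matrix

lemma mpow_eq_cfc {d : ℕ} {A : Matrix (Fin d) (Fin d) ℂ} (hA : A.IsHermitian) (r : ℝ) :
    mpow A r = cfc (fun x : ℝ => x ^ r) A := by
  rw [mpow, dif_pos hA, hA.cfc_eq, IsHermitian.cfc, Unitary.conjStarAlgAut_apply]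
  rfl

lemma mpow_add_of_posSemidef {d : ℕ} {A : Matrix (Fin d) (Fin d) ℂ} (hA : A.PosSemidef)
    {p q : ℝ} (hpq : p + q ≠ 0) : mpow A (p + q) = mpow A p * mpow A q := by
  rw [mpow_eq_cfc hA.isHermitian, mpow_eq_cfc hA.isHermitian, mpow_eq_cfc hA.isHermitian,
    ← cfc_mul (hf := A.finite_real_spectrum.continuousOn _)
      (hg := A.finite_real_spectrum.continuousOn _)]
  refine cfc_congr fun x hx => Real.rpow_add' ?_ hpq
  obtain ⟨i, rfl⟩ := hA.isHermitian.spectrum_real_eq_range_eigenvalues ▸ hx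
  exact hA.eigenvalues_nonneg i

lemma mpow_add_of_posDef {d : ℕ} {A : Matrix (Fin d) (Fin d) ℂ} (hA : A.PosDef) (p q : ℝ) :
    mpow A (p + q) = mpow A p * mpow A q := by
  rw [mpow_eq_cfc hA.isHermitian, mpow_eq_cfc hA.isHermitian, mpow_eq_cfc hA.isHermitian,
    ← cfc_mul (hf := A.finite_real_spectrum.continuousOn _)
      (hg := A.finite_real_spectrum.continuousOn _)]
  refine cfc_congr fun x hx => Real.rpow_add ?_ p q
  obtain ⟨i, rfl⟩ := hA.isHermitian.spectrum_real_eq_range_eigenvalues ▸ hx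
  exact hA.eigenvalues_pos i

lemma mpow_isHermitian {d : ℕ} {A : Matrix (Fin d) (Fin d) ℂ} (hA : A.IsHermitian) (r : ℝ) :
    (mpow A r).IsHermitian := by
  rw [mpow_eq_cfc hA]
  exact cfc_predicate _ A

lemma re_trace_mul_self_le {n 𝕜 : Type*} [Fintype n] [RCLike 𝕜] (X : Matrix n n 𝕜) :
    RCLike.re (X * X).trace ≤ RCLike.re (X * Xᴴ).trace := by
  have hY := RCLike.nonneg_iff.mp (posSemidef_self_mul_conjTranspose (X - Xᴴ)).trace_nonneg
  have hconj : (Xᴴ * Xᴴ).trace = star (X * X).trace := by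
    rw [← conjTranspose_mul, trace_conjTranspose]
  have hcomm : (Xᴴ * X).trace = (X * Xᴴ).trace := trace_mul_comm _ _
  simp only [conjTranspose_sub, conjTranspose_conjTranspose, sub_mul, mul_sub, trace_sub,
    map_sub, hconj, hcomm, RCLike.star_def, RCLike.conj_re] at hY
  linarith [hY.1]

lemma re_trace_sq_mul_le {n 𝕜 : Type*} [Fintype n] [DecidableEq n] [RCLike 𝕜]
    {A B : Matrix n n 𝕜} (hA : A.IsHermitian) (hB : B.IsHermitian) :
    RCLike.re ((B * A * B) ^ 2).trace ≤ RCLike.re (B * B * (A * A) * (B * B)).trace := by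
  set X := A * (B * B)
  have hX : Xᴴ = B * B * A := by simp [X, hA.eq, hB.eq, Matrix.mul_assoc]
  have hL : ((B * A * B) ^ 2).trace = (X * X).trace := by
    rw [sq, show B * A * B * (B * A * B) = B * (A * B * B * A * B) by noncomm_ring,
      trace_mul_comm]
    simp only [X, Matrix.mul_assoc]
  have hR : (B * B * (A * A) * (B * B)).trace = (X * Xᴴ).trace := by
    rw [hX, show B * B * (A * A) * (B * B) = B * B * A * (A * (B * B)) by noncomm_ring,
      trace_mul_comm]
  rw [hL, hR]
  exact re_trace_mul_self_le X

theorem stmt_1_general {d : ℕ} (ρ σ : Matrix (Fin d) (Fin d) ℂ)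
    (hρ : ρ.PosSemidef) (hσ : σ.PosDef) (s : ℝ) (hs0 : 0 < s) :
    ((mpow σ (-s / 4) * mpow ρ ((1 + s) / 2) * mpow σ (-s / 4)) ^ 2).trace.re ≤
      (mpow σ (-s / 2) * mpow ρ (1 + s) * mpow σ (-s / 2)).trace.re := by
  have hσ_half : mpow σ (-s / 2) = mpow σ (-s / 4) * mpow σ (-s / 4) := by
    rw [← mpow_add_of_posDef hσ]
    ring_nf
  have hρ_full : mpow ρ (1 + s) = mpow ρ ((1 + s) / 2) * mpow ρ ((1 + s) / 2) := by
    rw [← mpow_add_of_posSemidef hρ (by linarith)]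
    ring_nf
  rw [hσ_half, hρ_full]
  exact re_trace_sq_mul_le (mpow_isHermitian hρ.isHermitian _)
    (mpow_isHermitian hσ.isHermitian _)

theorem stmt_1 {d : ℕ} (hd : 1 ≤ d) (ρ σ : Matrix (Fin d) (Fin d) ℂ)
    (hρ : ρ.PosSemidef) (hσ : σ.PosDef) (s : ℝ) (hs0 : 0 < s) (hs1 : s ≤ 1) :
    ((mpow σ (-s / 4) * mpow ρ ((1 + s) / 2) * mpow σ (-s / 4)) ^ 2).trace.re ≤
      (mpow σ (-s / 2) * mpow ρ (1 + s) * mpow σ (-s / 2)).trace.re :=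
  stmt_1_general ρ σ hρ hσ s hs0
end

section
/- Let P^{AE} be a sub-distribution on A × E and let s > 0. For every normalized distribution Q on E with Q(e) > 0 for all e, Σ_{a,e} P^{AE}(a,e)^{1+s} · Q(e)^{-s} ≥ ( Σ_{e∈E} ( Σ_{a∈A} P^{AE}(a,e)^{1+s} )^{1/(1+s)} )^{1+s}. Moreover, if the marginal P^E(e) := Σ_a P^{AE}(a,e) is strictly positive for every e, then equality holds for the particular choice Q*(e) := (Σ_a P^{AE}(a,e)^{1+s})^{1/(1+s)} / Σ_{e'} (Σ_a P^{AE}(a,e')^{1+s})^{1/(1+s)}. -/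
/-!
Summing over `a` first, the left-hand side is `∑ e, x e ^ (1 + s) * Q e ^ (-s)` with
`x e = (∑ a, P (a, e) ^ (1 + s)) ^ (1 / (1 + s))`. Radon's inequality, i.e. the weighted Hölder
inequality with weights `Q` applied to `x / Q`, bounds this below by `(∑ e, x e) ^ (1 + s)` when
`∑ e, Q e = 1`, with equality for `Q` proportional to `x`.
-/

open scoped BigOperators

open Real Finset

section

variable {ι : Type*} [Fintype ι]

/-- Radon's inequality. -/
theorem rpow_sum_le_rpow_sum_mul_sum_rpow_mul_rpow_neg {x Q : ι → ℝ} {s : ℝ} (hs : 0 ≤ s)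
    (hx : ∀ i, 0 ≤ x i) (hQ : ∀ i, 0 < Q i) :
    (∑ i, x i) ^ (1 + s) ≤ (∑ i, Q i) ^ s * ∑ i, x i ^ (1 + s) * Q i ^ (-s) := by
  have hp : 0 < 1 + s := by linarith
  have holder := inner_le_weight_mul_Lp_of_nonneg univ (by linarith : 1 ≤ 1 + s) Q
    (fun i => x i / Q i) (fun i => (hQ i).le) (fun i => div_nonneg (hx i) (hQ i).le)
  have hweight : ∀ i, Q i * (x i / Q i) = x i := fun i => mul_div_cancel₀ _ (hQ i).ne'
  have hweight_rpow : ∀ i, Q i * (x i / Q i) ^ (1 + s) = x i ^ (1 + s) * Q i ^ (-s) := by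
    intro i
    rw [div_rpow (hx i) (hQ i).le, show -s = 1 - (1 + s) by ring, rpow_sub (hQ i), rpow_one]
    ring
  simp only [hweight, hweight_rpow] at holder
  have hQsum : 0 ≤ ∑ i, Q i := sum_nonneg fun i _ => (hQ i).le
  have hS : 0 ≤ ∑ i, x i ^ (1 + s) * Q i ^ (-s) :=
    sum_nonneg fun i _ => mul_nonneg (rpow_nonneg (hx i) _) (rpow_nonneg (hQ i).le _)
  calc (∑ i, x i) ^ (1 + s)
      ≤ ((∑ i, Q i) ^ (1 - (1 + s)⁻¹) * (∑ i, x i ^ (1 + s) * Q i ^ (-s)) ^ (1 + s)⁻¹) ^ (1 + s) :=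
        rpow_le_rpow (sum_nonneg fun i _ => hx i) holder hp.le
    _ = (∑ i, Q i) ^ s * ∑ i, x i ^ (1 + s) * Q i ^ (-s) := by
        rw [mul_rpow (rpow_nonneg hQsum _) (rpow_nonneg hS _), ← rpow_mul hQsum,
          rpow_inv_rpow hS hp.ne']
        congr 2
        field_simp
        ring

theorem rpow_one_add_mul_div_rpow_neg {x T s : ℝ} (hx : 0 ≤ x) (hT : 0 < T) (hs : 1 + s ≠ 0) :
    x ^ (1 + s) * (x / T) ^ (-s) = x * T ^ s := by
  rcases hx.eq_or_lt with rfl | hx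
  · simp [zero_rpow hs]
  rw [div_rpow hx.le hT.le, rpow_neg hx.le, rpow_neg hT.le, rpow_add hx, rpow_one]
  field_simp

theorem sum_rpow_one_add_mul_div_sum_rpow_neg {x : ι → ℝ} {s : ℝ} (hx : ∀ i, 0 ≤ x i)
    (hs : 1 + s ≠ 0) :
    ∑ i, x i ^ (1 + s) * (x i / ∑ j, x j) ^ (-s) = (∑ i, x i) ^ (1 + s) := by
  rcases (sum_nonneg fun i _ => hx i).eq_or_lt with hT | hT
  · have hx0 : ∀ i, x i = 0 := fun i =>
      (sum_eq_zero_iff_of_nonneg fun j _ => hx j).mp hT.symm i (mem_univ i)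
    simp [hx0, zero_rpow hs]
  · simp only [rpow_one_add_mul_div_rpow_neg (hx _) hT hs]
    rw [← sum_mul, rpow_add' hT.le hs, rpow_one]

end

theorem stmt_3_general {A E : Type*} [Fintype A] [Fintype E]
    (P : A × E → ℝ) (hP0 : ∀ x, 0 ≤ P x)
    (s : ℝ) (hs : 0 < s) :
    (∀ Q : E → ℝ, (∀ e, 0 < Q e) → (∑ e, Q e) = 1 →
      (∑ e : E, (∑ a : A, P (a, e) ^ (1 + s)) ^ (1 / (1 + s))) ^ (1 + s) ≤
        ∑ a : A, ∑ e : E, P (a, e) ^ (1 + s) * Q e ^ (-s)) ∧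
    ((∀ e : E, 0 < ∑ a, P (a, e)) →
      ∑ a : A, ∑ e : E, P (a, e) ^ (1 + s) *
          ((∑ a', P (a', e) ^ (1 + s)) ^ (1 / (1 + s)) /
            ∑ e', (∑ a', P (a', e') ^ (1 + s)) ^ (1 / (1 + s))) ^ (-s) =
        (∑ e : E, (∑ a : A, P (a, e) ^ (1 + s)) ^ (1 / (1 + s))) ^ (1 + s)) := by
  set F : E → ℝ := fun e => ∑ a, P (a, e) ^ (1 + s)
  have hs' : 1 + s ≠ 0 := by linarith
  have hF : ∀ e, 0 ≤ F e := fun e => sum_nonneg fun a _ => rpow_nonneg (hP0 _) _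
  have hF_root : ∀ e, 0 ≤ F e ^ (1 / (1 + s)) := fun e => rpow_nonneg (hF e) _
  have hF_root_rpow : ∀ e, (F e ^ (1 / (1 + s))) ^ (1 + s) = F e := fun e => by
    rw [one_div, rpow_inv_rpow (hF e) hs']
  have hswap : ∀ g : E → ℝ, ∑ a, ∑ e, P (a, e) ^ (1 + s) * g e = ∑ e, F e * g e := fun g => by
    rw [sum_comm]
    simp only [F, sum_mul]
  refine ⟨fun Q hQ hQ1 => ?_, fun _ => ?_⟩
  · have radon := rpow_sum_le_rpow_sum_mul_sum_rpow_mul_rpow_neg hs.le hF_root hQ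
    simp only [hQ1, one_rpow, one_mul, hF_root_rpow] at radon
    rwa [hswap]
  · have radon_eq := sum_rpow_one_add_mul_div_sum_rpow_neg hF_root hs'
    simp only [hF_root_rpow] at radon_eq
    rwa [hswap]

theorem stmt_3 {A E : Type*} [Fintype A] [Nonempty A] [Fintype E] [Nonempty E]
    (P : A × E → ℝ) (hP0 : ∀ x, 0 ≤ P x) (hP1 : ∑ x, P x ≤ 1)
    (s : ℝ) (hs : 0 < s) :
    (∀ Q : E → ℝ, (∀ e, 0 < Q e) → (∑ e, Q e) = 1 →
      (∑ e : E, (∑ a : A, P (a, e) ^ (1 + s)) ^ (1 / (1 + s))) ^ (1 + s) ≤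
        ∑ a : A, ∑ e : E, P (a, e) ^ (1 + s) * Q e ^ (-s)) ∧
    ((∀ e : E, 0 < ∑ a, P (a, e)) →
      ∑ a : A, ∑ e : E, P (a, e) ^ (1 + s) *
          ((∑ a', P (a', e) ^ (1 + s)) ^ (1 / (1 + s)) /
            ∑ e', (∑ a', P (a', e') ^ (1 + s)) ^ (1 / (1 + s))) ^ (-s) =
        (∑ e : E, (∑ a : A, P (a, e) ^ (1 + s)) ^ (1 / (1 + s))) ^ (1 + s)) :=
  stmt_3_general P hP0 s hs
end

section
/- Let P be a sub-distribution on a product A × B × E of finite sets. Then for every t ∈ (0,1), Σ_{b∈B, e∈E} ( Σ_{a∈A} P(a,b,e)^{1/(1-t)} )^{1-t} ≤ |B|^t · Σ_{e∈E} ( Σ_{a∈A, b∈B} P(a,b,e)^{1/(1-t)} )^{1-t}. (Equivalently, e^{φ(t|A|B,E|P)} ≤ |B|^t · e^{φ(t|A,B|E|P)}.) -/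
open scoped BigOperators
open Finset

/-- The power-mean inequality with exponent `1 / p ≥ 1`, applied to the `p`-th powers. -/
theorem Real.sum_rpow_le_card_rpow_mul_rpow_sum {ι : Type*} (s : Finset ι) {f : ι → ℝ}
    (hf : ∀ i ∈ s, 0 ≤ f i) {p : ℝ} (hp0 : 0 < p) (hp1 : p ≤ 1) :
    ∑ i ∈ s, f i ^ p ≤ (#s : ℝ) ^ (1 - p) * (∑ i ∈ s, f i) ^ p := by
  have hinv : 1 ≤ 1 / p := by rw [le_div_iff₀ hp0]; linarith
  have hpow : ∀ i ∈ s, (f i ^ p) ^ (1 / p) = f i := fun i hi => by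
    rw [← Real.rpow_mul (hf i hi), mul_one_div_cancel hp0.ne', Real.rpow_one]
  have hmean := Real.rpow_sum_le_const_mul_sum_rpow_of_nonneg (s := s) hinv
    (fun i hi => Real.rpow_nonneg (hf i hi) p)
  rw [sum_congr rfl hpow] at hmean
  have hsum_pow : 0 ≤ ∑ i ∈ s, f i ^ p :=
    sum_nonneg fun i hi => Real.rpow_nonneg (hf i hi) p
  have hcard : (0 : ℝ) ≤ #s := Nat.cast_nonneg _
  calc ∑ i ∈ s, f i ^ p = ((∑ i ∈ s, f i ^ p) ^ (1 / p)) ^ p := by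
        rw [← Real.rpow_mul hsum_pow, one_div_mul_cancel hp0.ne', Real.rpow_one]
    _ ≤ ((#s : ℝ) ^ (1 / p - 1) * ∑ i ∈ s, f i) ^ p := by gcongr
    _ = (#s : ℝ) ^ (1 - p) * (∑ i ∈ s, f i) ^ p := by
        rw [Real.mul_rpow (by positivity) (sum_nonneg hf), ← Real.rpow_mul hcard]
        field_simp

theorem stmt_4_general {A B E : Type*} [Fintype A] [Fintype B]
    [Fintype E]
    (P : A × B × E → ℝ) (hP0 : ∀ x, 0 ≤ P x)
    (t : ℝ) (ht0 : 0 < t) (ht1 : t < 1) :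
    ∑ b : B, ∑ e : E, (∑ a : A, P (a, b, e) ^ (1 / (1 - t))) ^ (1 - t) ≤
      (Fintype.card B : ℝ) ^ t *
        ∑ e : E, (∑ a : A, ∑ b : B, P (a, b, e) ^ (1 / (1 - t))) ^ (1 - t) := by
  rw [sum_comm, mul_sum]
  refine sum_le_sum fun e _ => ?_
  have h := Real.sum_rpow_le_card_rpow_mul_rpow_sum univ
    (f := fun b => ∑ a, P (a, b, e) ^ (1 / (1 - t)))
    (fun b _ => sum_nonneg fun a _ => Real.rpow_nonneg (hP0 _) _)
    (sub_pos.2 ht1) (by linarith)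
  rwa [sub_sub_cancel, card_univ, sum_comm] at h

theorem stmt_4 {A B E : Type*} [Fintype A] [Nonempty A] [Fintype B] [Nonempty B]
    [Fintype E] [Nonempty E]
    (P : A × B × E → ℝ) (hP0 : ∀ x, 0 ≤ P x) (hP1 : ∑ x, P x ≤ 1)
    (t : ℝ) (ht0 : 0 < t) (ht1 : t < 1) :
    ∑ b : B, ∑ e : E, (∑ a : A, P (a, b, e) ^ (1 / (1 - t))) ^ (1 - t) ≤
      (Fintype.card B : ℝ) ^ t *
        ∑ e : E, (∑ a : A, ∑ b : B, P (a, b, e) ^ (1 / (1 - t))) ^ (1 - t) :=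
  stmt_4_general P hP0 t ht0 ht1
end

section
/- Let 𝔽_q be a finite field with q elements and n ≥ m ≥ 1. Let (X, w) be a finite probability space and for each x ∈ X let f_x : 𝔽_q^n → 𝔽_q^m be a surjective linear map. Assume the ensemble is universal₂, i.e. for all a₁ ≠ a₂ in 𝔽_q^n, Pr_X[f_X(a₁) = f_X(a₂)] ≤ q^{-m} (equivalently, Pr_X[a ∈ ker f_X] ≤ q^{-m} for every nonzero a). Then the ensemble of dual codes ((ker f_X)^⊥) is q-almost universal₂: for every nonzero y ∈ 𝔽_q^n, Pr_X[y ∈ (ker f_X)^⊥] ≤ q · q^{m−n}. -/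
open scoped BigOperators

open Classical in
/-- Probability of the event `p` with respect to the weight `w` on a finite index set. -/
noncomputable def prOf {X : Type*} [Fintype X] (w : X → ℝ) (p : X → Prop) : ℝ :=
  ∑ x, if p x then w x else 0

/-
Fix `y ≠ 0`, let `H = ker ⟪·, y⟫` (a hyperplane, `|H| = q^(n-1)`) and `C_x = ker f_x`, so that
`|C_x| ≥ q^(n-m)`. Put `N_x = |C_x ∩ H|`. Always `N_x ≥ |C_x| / q`, and `N_x = |C_x|` when
`C_x ⊆ H`, i.e. when `y ∈ C_xᗮ`; hence `E[N] ≥ q^(n-m-1) (1 + (q-1) Pr[y ∈ C_Xᗮ])`. On the other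
hand `E[N] = ∑_{v ∈ H} Pr[v ∈ C_X] ≤ 1 + q^(n-1) q^(-m)` by universality, the `1` coming from
`v = 0`. Comparing the two gives `(q-1) Pr[y ∈ C_Xᗮ] ≤ q^(m+1-n)`.
-/

open Finset LinearMap

namespace LinearMap

variable {R M N : Type*} [Ring R] [AddCommGroup M] [Module R M] [AddCommGroup N] [Module R N]

theorem card_le_card_ker_mul_card [Finite N] (g : M →ₗ[R] N) :
    Nat.card M ≤ Nat.card (ker g) * Nat.card N := by
  rw [(ker g).card_eq_card_quotient_mul_card, Nat.card_congr g.quotKerEquivRange.toEquiv]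
  exact Nat.mul_le_mul_left _ (Nat.card_le_card_of_injective _ Subtype.val_injective)

theorem card_eq_card_ker_mul_card {g : M →ₗ[R] N} (hg : Function.Surjective g) :
    Nat.card M = Nat.card (ker g) * Nat.card N := by
  rw [(ker g).card_eq_card_quotient_mul_card,
    Nat.card_congr (g.quotKerEquivOfSurjective hg).toEquiv]

theorem card_le_card_inf_ker_mul_card [Finite N] (K : Submodule R M) (g : M →ₗ[R] N) :
    Nat.card K ≤ Nat.card ↥(K ⊓ ker g) * Nat.card N := by
  have := card_le_card_ker_mul_card (g.domRestrict K)
  rwa [Nat.card_congr (α := ker (g.domRestrict K)) (β := ↥(K ⊓ ker g))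
    (Equiv.subtypeSubtypeEquivSubtypeInter (· ∈ K) (· ∈ ker g))] at this

end LinearMap

section prOf

variable {X : Type*} [Fintype X] (w : X → ℝ)

open Classical in
theorem prOf_eq_sum_mul (p : X → Prop) : prOf w p = ∑ x, w x * if p x then 1 else 0 := by
  simp only [prOf, mul_ite, mul_one, mul_zero]

variable {w}

theorem prOf_nonneg (hw0 : ∀ x, 0 ≤ w x) (p : X → Prop) : 0 ≤ prOf w p := by
  classical
  exact sum_nonneg fun x _ => by split_ifs <;> simp [hw0 x]

theorem prOf_le_one (hw0 : ∀ x, 0 ≤ w x) (hw1 : ∑ x, w x = 1) (p : X → Prop) :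
    prOf w p ≤ 1 := by
  classical
  exact hw1 ▸ sum_le_sum fun x _ => by split_ifs <;> simp [hw0 x]

open Classical in
theorem sum_mul_card_filter_eq_sum_prOf {α : Type*} (r : X → α → Prop) (s : Finset α) :
    ∑ x, w x * #{v ∈ s | r x v} = ∑ v ∈ s, prOf w (r · v) := by
  simp only [card_filter, Nat.cast_sum, Nat.cast_ite, Nat.cast_one, Nat.cast_zero, mul_sum]
  rw [sum_comm]
  exact sum_congr rfl fun v _ => (prOf_eq_sum_mul w _).symm

end prOf

theorem sum_mul_card_inf_le {X R V : Type*} [Fintype X] {w : X → ℝ} [Ring R] [AddCommGroup V]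
    [Module R V] [Fintype V] (hw0 : ∀ x, 0 ≤ w x) (hw1 : ∑ x, w x = 1)
    (K : X → Submodule R V) (H : Submodule R V) {ε : ℝ} (hε : 0 ≤ ε)
    (hK : ∀ v ≠ 0, prOf w (fun x => v ∈ K x) ≤ ε) :
    ∑ x, w x * (Nat.card ↥(K x ⊓ H) : ℝ) ≤ 1 + Nat.card H * ε := by
  classical
  set s : Finset V := {v | v ∈ H}
  have hcard : ∀ K' : Submodule R V, Nat.card ↥(K' ⊓ H) = #{v ∈ s | v ∈ K'} := fun K' => by
    simp [s, Nat.card_eq_fintype_card, Fintype.card_subtype, filter_filter, and_comm]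
  have hs : Nat.card H = #s := by simpa using hcard ⊤
  simp only [hcard, hs, sum_mul_card_filter_eq_sum_prOf]
  rw [← add_sum_erase s (fun v => prOf w (fun x => v ∈ K x)) (by simp [s] : (0 : V) ∈ s)]
  gcongr
  · exact prOf_le_one hw0 hw1 _
  · calc ∑ v ∈ s.erase 0, prOf w (fun x => v ∈ K x) ≤ #(s.erase 0) • ε :=
          sum_le_card_nsmul _ _ _ fun v hv => hK v (ne_of_mem_erase hv)
      _ ≤ #s * ε := by
          rw [nsmul_eq_mul]
          gcongr
          exact erase_subset 0 s

open Classical in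
theorem card_mul_le_card_inf_ker {F V : Type*} [Field F] [Finite F] [AddCommGroup V]
    [Module F V] (K : Submodule F V) (φ : V →ₗ[F] F) {c : ℕ}
    (hK : Nat.card V ≤ Nat.card K * c) :
    (Nat.card V : ℝ) * (1 + (Nat.card F - 1) * if K ≤ ker φ then 1 else 0) ≤
      Nat.card F * c * Nat.card ↥(K ⊓ ker φ) := by
  have hKφ := card_le_card_inf_ker_mul_card K φ
  split_ifs with h
  · rw [inf_eq_left.mpr h]
    have : (Nat.card V : ℝ) ≤ Nat.card K * c := by exact_mod_cast hK
    nlinarith [(Nat.cast_nonneg (Nat.card F) : (0 : ℝ) ≤ _)]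
  · have : Nat.card V ≤ Nat.card F * c * Nat.card ↥(K ⊓ ker φ) :=
      (hK.trans (Nat.mul_le_mul_right c hKφ)).trans_eq (by ring)
    simpa using (by exact_mod_cast this : (Nat.card V : ℝ) ≤ _)

theorem prOf_ker_le_ker_mul_le {X F V W : Type*} [Fintype X] {w : X → ℝ} [Field F] [Finite F]
    [AddCommGroup V] [Module F V] [Fintype V] [AddCommGroup W] [Module F W] [Finite W]
    (hw0 : ∀ x, 0 ≤ w x) (hw1 : ∑ x, w x = 1) (f : X → V →ₗ[F] W)
    (huniv : ∀ v ≠ 0, prOf w (fun x => f x v = 0) ≤ (Nat.card W : ℝ)⁻¹)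
    {φ : V →ₗ[F] F} (hφ : φ ≠ 0) :
    prOf w (fun x => ker (f x) ≤ ker φ) * (Nat.card F - 1) * Nat.card V ≤
      Nat.card F * Nat.card W := by
  classical
  set q : ℝ := (Nat.card F : ℝ)
  set P := prOf w (fun x => ker (f x) ≤ ker φ)
  set N : X → ℝ := fun x => Nat.card ↥(ker (f x) ⊓ ker φ)
  have hW : (0 : ℝ) < Nat.card W := by exact_mod_cast Nat.card_pos
  have hH : (Nat.card (ker φ) : ℝ) * q = Nat.card V := by
    simp only [q]
    exact_mod_cast (card_eq_card_ker_mul_card (surjective_of_ne_zero hφ)).symm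
  have hmean : ∑ x, w x * N x ≤ 1 + Nat.card (ker φ) * (Nat.card W : ℝ)⁻¹ :=
    sum_mul_card_inf_le hw0 hw1 (fun x => ker (f x)) (ker φ) (inv_nonneg.2 hW.le) huniv
  have hlower : Nat.card V * (1 + (q - 1) * P) ≤ q * Nat.card W * ∑ x, w x * N x :=
    calc Nat.card V * (1 + (q - 1) * P)
        = ∑ x, w x * (Nat.card V * (1 + (q - 1) * if ker (f x) ≤ ker φ then 1 else 0)) := by
          simp only [P, prOf_eq_sum_mul, mul_add, mul_one, sum_add_distrib, ← sum_mul, hw1,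
            mul_sum]
          ring_nf
      _ ≤ ∑ x, w x * (q * Nat.card W * N x) :=
          sum_le_sum fun x _ => mul_le_mul_of_nonneg_left
            (card_mul_le_card_inf_ker _ φ (card_le_card_ker_mul_card (f x))) (hw0 x)
      _ = q * Nat.card W * ∑ x, w x * N x := by
          rw [mul_sum]
          exact sum_congr rfl fun x _ => by ring
  have hupper : q * Nat.card W * ∑ x, w x * N x ≤ q * Nat.card W + Nat.card V := by
    calc q * Nat.card W * ∑ x, w x * N x
        ≤ q * Nat.card W * (1 + Nat.card (ker φ) * (Nat.card W : ℝ)⁻¹) := by gcongr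
      _ = q * Nat.card W + Nat.card V := by
          rw [← hH]
          field_simp
  linarith

theorem stmt_5_general {F : Type*} [Field F] [Fintype F] (n m : ℕ)
    {X : Type*} [Fintype X] (w : X → ℝ)
    (hw0 : ∀ x, 0 ≤ w x) (hw1 : ∑ x, w x = 1)
    (f : X → ((Fin n → F) →ₗ[F] (Fin m → F)))
    (huniv : ∀ a₁ a₂ : Fin n → F, a₁ ≠ a₂ →
      prOf w (fun x => f x a₁ = f x a₂) ≤ ((Fintype.card F : ℝ) ^ m)⁻¹) :
    ∀ y : Fin n → F, y ≠ 0 →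
      prOf w (fun x => ∀ v : Fin n → F, f x v = 0 → ∑ i, v i * y i = 0) ≤
        (Fintype.card F : ℝ) * (Fintype.card F : ℝ) ^ m / (Fintype.card F : ℝ) ^ n := by
  intro y hy
  set φ : (Fin n → F) →ₗ[F] F := (dotProductBilin F F).flip y
  have hφ : φ ≠ 0 := by
    obtain ⟨i, hi⟩ := Function.ne_iff.mp hy
    intro h
    exact hi (by simpa [φ, single_dotProduct] using LinearMap.congr_fun h (Pi.single i 1))
  have hcard (k : ℕ) : Nat.card (Fin k → F) = Fintype.card F ^ k := by
    simp [Nat.card_eq_fintype_card]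
  have key := prOf_ker_le_ker_mul_le hw0 hw1 f (fun v hv => by
    simpa [hcard] using huniv v 0 hv) hφ
  rw [hcard, hcard, Nat.card_eq_fintype_card] at key
  push_cast at key
  change prOf w (fun x => ker (f x) ≤ ker φ) ≤ _
  have hP := prOf_nonneg hw0 (fun x => ker (f x) ≤ ker φ)
  have hq : (2 : ℝ) ≤ Fintype.card F := by exact_mod_cast Fintype.one_lt_card
  rw [le_div_iff₀ (by positivity)]
  nlinarith [mul_nonneg hP (by positivity : (0 : ℝ) ≤ (Fintype.card F : ℝ) ^ n)]

theorem stmt_5 {F : Type*} [Field F] [Fintype F] (n m : ℕ) (hm : 1 ≤ m) (hnm : m ≤ n)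
    {X : Type*} [Fintype X] [Nonempty X] (w : X → ℝ)
    (hw0 : ∀ x, 0 ≤ w x) (hw1 : ∑ x, w x = 1)
    (f : X → ((Fin n → F) →ₗ[F] (Fin m → F))) (hfsurj : ∀ x, Function.Surjective (f x))
    (huniv : ∀ a₁ a₂ : Fin n → F, a₁ ≠ a₂ →
      prOf w (fun x => f x a₁ = f x a₂) ≤ ((Fintype.card F : ℝ) ^ m)⁻¹) :
    ∀ y : Fin n → F, y ≠ 0 →
      prOf w (fun x => ∀ v : Fin n → F, f x v = 0 → ∑ i, v i * y i = 0) ≤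
        (Fintype.card F : ℝ) * (Fintype.card F : ℝ) ^ m / (Fintype.card F : ℝ) ^ n :=
  stmt_5_general n m w hw0 hw1 f huniv
end

section
/- Let 𝔽_q be a finite field with q elements, n ≥ 1, and 0 ≤ t ≤ n. Then there exists a linear subspace C ⊆ 𝔽_q^n with dim C = t such that for every nonzero x ∈ 𝔽_q^n, q^n · #{ y ∈ C : y has the same type as x } < (n+1)^{q−1} · q^t · #{ y ∈ 𝔽_q^n : y has the same type as x }. (Equivalently, ε(C) < (n+1)^{q−1}, where ε(C) := max over nonzero x of q^n·#{y ∈ C : y has the same type as x} / ( |C| · #{y ∈ 𝔽_q^n : y has the same type as x} ).) -/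
/-!
Average over the set `S` of all `t`-dimensional subspaces `C`. Since `GL(V)` acts transitively on
nonzero vectors, each nonzero vector lies in the same number `N` of members of `S`, and double
counting gives `q ^ n * N ≤ q ^ t * #S`. Hence for the type classes `T` of nonzero vectors the
average over `C ∈ S` of `∑_T q ^ n * #(T ∩ C) / #T` is at most `(#classes) * q ^ t`, so some `C`
lies below it. A type is determined by the counts of the `q - 1` nonzero letters, each in
`[0, n]`, and the all-zero count belongs to the zero vector alone, so there are fewer than
`(n + 1) ^ (q - 1)` classes.
-/

open scoped BigOperators

open Classical in
/-- Number of elements of a finite type satisfying a predicate. -/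
noncomputable def cnt {Y : Type*} [Fintype Y] (p : Y → Prop) : ℕ :=
  (Finset.univ.filter p).card

/-- Two vectors have the same type (empirical distribution). -/
def sameType {F : Type*} {n : ℕ} (x y : Fin n → F) : Prop :=
  ∀ a : F, cnt (fun i => x i = a) = cnt (fun i => y i = a)

open Finset Module

theorem cnt_eq_card {Y : Type*} [Fintype Y] (p : Y → Prop) [DecidablePred p] :
    cnt p = #{y | p y} := by
  unfold cnt
  congr 1
  exact filter_congr_decidable _ _ _

section SubspaceCounting

variable {F V : Type*} [Field F] [AddCommGroup V] [Module F V]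

theorem exists_linearEquiv_apply_eq [FiniteDimensional F V] {v w : V} (hv : v ≠ 0)
    (hw : w ≠ 0) : ∃ g : V ≃ₗ[F] V, g v = w := by
  obtain ⟨g, hg⟩ := Submodule.exists_linearEquiv_restrict_eq
    ((LinearEquiv.toSpanNonzeroSingleton F V v hv).symm ≪≫ₗ
      LinearEquiv.toSpanNonzeroSingleton F V w hw)
  refine ⟨g, ?_⟩
  have := hg (LinearEquiv.toSpanNonzeroSingleton F V v hv 1)
  rw [LinearEquiv.trans_apply, LinearEquiv.symm_apply_apply,
    LinearEquiv.toSpanNonzeroSingleton_one, LinearEquiv.toSpanNonzeroSingleton_one] at this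
  exact this.symm

variable (F V) in
noncomputable def subspacesOfFinrank [Fintype (Submodule F V)] (t : ℕ) : Finset (Submodule F V) :=
  {C | finrank F C = t}

open scoped Classical in
theorem card_filter_mem_subspacesOfFinrank_eq [Fintype (Submodule F V)] [FiniteDimensional F V]
    (t : ℕ) {v w : V} (hv : v ≠ 0) (hw : w ≠ 0) :
    #{C ∈ subspacesOfFinrank F V t | v ∈ C} = #{C ∈ subspacesOfFinrank F V t | w ∈ C} := by
  obtain ⟨g, rfl⟩ := exists_linearEquiv_apply_eq (F := F) hv hw
  refine card_equiv (Submodule.orderIsoMapComap g).toEquiv fun C => ?_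
  simp [subspacesOfFinrank, LinearEquiv.finrank_map_eq, Submodule.mem_map_equiv]

theorem subspacesOfFinrank_nonempty [Fintype (Submodule F V)] [FiniteDimensional F V] {t : ℕ}
    (ht : t ≤ finrank F V) : (subspacesOfFinrank F V t).Nonempty := by
  let b := Module.finBasis F V
  refine ⟨Submodule.span F (Set.range (b ∘ Fin.castLE ht)), mem_filter.2 ⟨mem_univ _, ?_⟩⟩
  rw [finrank_span_eq_card (b.linearIndependent.comp _ (Fin.castLE_injective ht)),
    Fintype.card_fin]

open scoped Classical in
/-- The zero vector lies in every member of `S`, and by transitivity all other vectors lie in as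
many members as `v`; summing over `w` counts the pairs `w ∈ C`. -/
theorem card_mul_card_filter_mem_subspacesOfFinrank_le [Fintype F] [Fintype V]
    [Fintype (Submodule F V)] (t : ℕ) {v : V} (hv : v ≠ 0) :
    Fintype.card V * #{C ∈ subspacesOfFinrank F V t | v ∈ C} ≤
      #(subspacesOfFinrank F V t) * Fintype.card F ^ t := by
  set S := subspacesOfFinrank F V t
  have hmin : ∀ w : V, #{C ∈ S | v ∈ C} ≤ #{C ∈ S | w ∈ C} := by
    intro w
    rcases eq_or_ne w 0 with rfl | hw
    · simpa using card_filter_le S _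
    · exact (card_filter_mem_subspacesOfFinrank_eq t hv hw).le
  have hcard : ∀ C ∈ S, #{w | w ∈ C} = Fintype.card F ^ t := by
    intro C hC
    rw [← (mem_filter.1 hC).2, ← card_eq_pow_finrank, ← Fintype.card_subtype]
  calc Fintype.card V * #{C ∈ S | v ∈ C}
      ≤ ∑ w, #{C ∈ S | w ∈ C} := by
        rw [← card_univ, ← smul_eq_mul, ← sum_const]
        exact sum_le_sum fun w _ => hmin w
    _ = ∑ C ∈ S, #{w | w ∈ C} :=
        (sum_card_bipartiteAbove_eq_sum_card_bipartiteBelow (fun C w => w ∈ C)).symm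
    _ = #S * Fintype.card F ^ t := by rw [sum_congr rfl hcard, sum_const, smul_eq_mul]

end SubspaceCounting

open scoped Classical in
/-- Any `C ∈ S` below the average of `∑ b ∈ P, m * #{y ∈ b | y ∈ C} / #b` works. -/
theorem exists_mem_forall_mul_card_filter_mem_le {α β : Type*} [SetLike α β] {S : Finset α}
    (hS : S.Nonempty) (P : Finset (Finset β)) {m k : ℕ}
    (hP : ∀ b ∈ P, ∀ y ∈ b, m * #{C ∈ S | y ∈ C} ≤ k * #S) :
    ∃ C ∈ S, ∀ b ∈ P, m * #{y ∈ b | y ∈ C} ≤ #P * k * #b := by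
  have hblock : ∀ b ∈ P, ∑ C ∈ S, (m * #{y ∈ b | y ∈ C} : ℚ) / #b ≤ k * #S := by
    intro b hb
    rcases b.eq_empty_or_nonempty with rfl | hne
    · simp only [filter_empty, card_empty, CharP.cast_eq_zero, div_zero, sum_const_zero]
      positivity
    rw [← sum_div, div_le_iff₀ (by exact_mod_cast hne.card_pos), ← mul_sum]
    have hcount : m * ∑ C ∈ S, #{y ∈ b | y ∈ C} ≤ k * #S * #b := calc
      m * ∑ C ∈ S, #{y ∈ b | y ∈ C} = ∑ y ∈ b, m * #{C ∈ S | y ∈ C} := by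
        rw [← mul_sum]
        exact congrArg (m * ·) (sum_card_bipartiteAbove_eq_sum_card_bipartiteBelow _)
      _ ≤ ∑ y ∈ b, k * #S := sum_le_sum (hP b hb)
      _ = k * #S * #b := by rw [sum_const, smul_eq_mul, mul_comm]
    exact_mod_cast hcount
  have hsum : ∑ C ∈ S, ∑ b ∈ P, (m * #{y ∈ b | y ∈ C} : ℚ) / #b ≤ ∑ C ∈ S, (#P * k : ℚ) := by
    rw [sum_comm, sum_const, nsmul_eq_mul]
    calc _ ≤ ∑ b ∈ P, (k * #S : ℚ) := sum_le_sum hblock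
      _ = #S * (#P * k) := by rw [sum_const, nsmul_eq_mul]; ring
  obtain ⟨C, hC, hfC⟩ := exists_le_of_sum_le hS hsum
  refine ⟨C, hC, fun b hb => ?_⟩
  rcases b.eq_empty_or_nonempty with rfl | hne
  · simp
  have hterm : (m * #{y ∈ b | y ∈ C} : ℚ) / #b ≤ #P * k :=
    (single_le_sum (f := fun b => (m * #{y ∈ b | y ∈ C} : ℚ) / #b) (fun b _ => by positivity)
      hb).trans hfC
  rw [div_le_iff₀ (by exact_mod_cast hne.card_pos)] at hterm
  exact_mod_cast hterm

section Types

variable {F : Type*} {n : ℕ}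

theorem sum_cnt_eq [Fintype F] (x : Fin n → F) : ∑ a, cnt (fun i => x i = a) = n := by
  classical
  simp only [cnt_eq_card]
  rw [← card_eq_sum_card_fiberwise (fun i _ => mem_univ (x i)), card_univ, Fintype.card_fin]

noncomputable def nonzeroLetterCounts [Zero F] (x : Fin n → F) : {a : F // a ≠ 0} → Fin (n + 1) :=
  fun a => ⟨cnt fun i => x i = a, Nat.lt_succ_of_le <| by
    classical
    simpa [cnt_eq_card] using card_filter_le univ fun i => x i = a⟩

theorem sameType_iff_nonzeroLetterCounts_eq [Fintype F] [Zero F] (x y : Fin n → F) :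
    sameType y x ↔ nonzeroLetterCounts y = nonzeroLetterCounts x := by
  classical
  refine ⟨fun h => funext fun a => Fin.ext (h a), fun h a => ?_⟩
  have hcounts : ∀ a ≠ 0, cnt (fun i => y i = a) = cnt (fun i => x i = a) :=
    fun a ha => congrArg Fin.val (congrFun h ⟨a, ha⟩)
  rcases eq_or_ne a 0 with rfl | ha
  · -- the count of `0` is `n` minus the counts of the nonzero letters
    have hy := sum_cnt_eq y
    have hx := sum_cnt_eq x
    rw [← add_sum_erase univ _ (mem_univ 0)] at hy hx
    rw [sum_congr rfl fun a ha => hcounts a (ne_of_mem_erase ha)] at hy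
    omega
  · exact hcounts a ha

theorem nonzeroLetterCounts_eq_zero_iff [Zero F] {x : Fin n → F} :
    nonzeroLetterCounts x = 0 ↔ x = 0 := by
  classical
  refine ⟨fun h => funext fun i => ?_, ?_⟩
  · by_contra hi
    have hcnt : cnt (fun j => x j = x i) = 0 := congrArg Fin.val (congrFun h ⟨x i, hi⟩)
    rw [cnt_eq_card, card_eq_zero, filter_eq_empty_iff] at hcnt
    exact hcnt (mem_univ i) rfl
  · rintro rfl
    funext a
    simp [nonzeroLetterCounts, cnt_eq_card, a.2.symm]

theorem ne_zero_of_sameType [Fintype F] [Zero F] {x y : Fin n → F} (hx : x ≠ 0)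
    (h : sameType y x) : y ≠ 0 := by
  rwa [Ne, ← nonzeroLetterCounts_eq_zero_iff, (sameType_iff_nonzeroLetterCounts_eq x y).1 h,
    nonzeroLetterCounts_eq_zero_iff]

open scoped Classical in
theorem card_image_sameType_classes_lt [Fintype F] [Zero F] :
    #(({x | x ≠ 0} : Finset (Fin n → F)).image fun x => ({y | sameType y x} : Finset _)) <
      (n + 1) ^ (Fintype.card F - 1) := by
  set V₀ : Finset (Fin n → F) := {x | x ≠ 0}
  have himage : (V₀.image fun x => ({y | sameType y x} : Finset _)) =
      (V₀.image nonzeroLetterCounts).image fun τ => ({y | nonzeroLetterCounts y = τ} : Finset _) := by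
    simp only [image_image, Function.comp_def, sameType_iff_nonzeroLetterCounts_eq]
  calc #(V₀.image fun x => ({y | sameType y x} : Finset _))
      ≤ #(V₀.image nonzeroLetterCounts) := himage ▸ card_image_le
    _ ≤ #(univ.erase 0) := card_le_card fun τ hτ => by
        obtain ⟨x, hx, rfl⟩ := mem_image.1 hτ
        exact mem_erase.2 ⟨nonzeroLetterCounts_eq_zero_iff.not.2 (mem_filter.1 hx).2, mem_univ _⟩
    _ < #univ := card_erase_lt_of_mem (mem_univ 0)
    _ = (n + 1) ^ (Fintype.card F - 1) := by
        simp [Fintype.card_subtype_compl]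

end Types

theorem stmt_7_general {F : Type*} [Field F] [Fintype F] (n t : ℕ) (ht : t ≤ n) :
    ∃ C : Submodule F (Fin n → F), Module.finrank F C = t ∧
      ∀ x : Fin n → F, x ≠ 0 →
        Fintype.card F ^ n * cnt (fun y => y ∈ C ∧ sameType y x) <
          (n + 1) ^ (Fintype.card F - 1) * Fintype.card F ^ t *
            cnt (fun y : Fin n → F => sameType y x) := by
  classical
  have : Fintype (Submodule F (Fin n → F)) :=
    Fintype.ofInjective SetLike.coe SetLike.coe_injective
  set S := subspacesOfFinrank F (Fin n → F) t
  have hS : S.Nonempty := subspacesOfFinrank_nonempty (by rwa [finrank_fin_fun])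
  set P := ({x | x ≠ 0} : Finset (Fin n → F)).image fun x => ({y | sameType y x} : Finset _)
  obtain ⟨C, hCS, hC⟩ := exists_mem_forall_mul_card_filter_mem_le hS P
    (m := Fintype.card F ^ n) (k := Fintype.card F ^ t) <| by
      intro b hb y hy
      obtain ⟨x, hx, rfl⟩ := mem_image.1 hb
      simpa [mul_comm] using card_mul_card_filter_mem_subspacesOfFinrank_le t
        (ne_zero_of_sameType (mem_filter.1 hx).2 (mem_filter.1 hy).2)
  refine ⟨C, (mem_filter.1 hCS).2, fun x hx => ?_⟩
  have hxP : ({y | sameType y x} : Finset _) ∈ P := mem_image_of_mem _ (by simpa using hx)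
  have hpos : 0 < #({y | sameType y x} : Finset (Fin n → F)) :=
    card_pos.2 ⟨x, mem_filter.2 ⟨mem_univ _, fun _ => rfl⟩⟩
  rw [cnt_eq_card, cnt_eq_card]
  calc Fintype.card F ^ n * #{y | y ∈ C ∧ sameType y x}
      = Fintype.card F ^ n * #{y ∈ {y | sameType y x} | y ∈ C} := by
        rw [filter_filter]; simp only [and_comm]
    _ ≤ #P * Fintype.card F ^ t * #{y | sameType y x} := hC _ hxP
    _ < (n + 1) ^ (Fintype.card F - 1) * Fintype.card F ^ t * #{y | sameType y x} := by
        gcongr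
        exact card_image_sameType_classes_lt

theorem stmt_7 {F : Type*} [Field F] [Fintype F] (n t : ℕ) (hn : 1 ≤ n) (ht : t ≤ n) :
    ∃ C : Submodule F (Fin n → F), Module.finrank F C = t ∧
      ∀ x : Fin n → F, x ≠ 0 →
        Fintype.card F ^ n * cnt (fun y => y ∈ C ∧ sameType y x) <
          (n + 1) ^ (Fintype.card F - 1) * Fintype.card F ^ t *
            cnt (fun y : Fin n → F => sameType y x) :=
  stmt_7_general n t ht
end

section
/- Let P^{AE} be a normalized distribution on A × E whose marginal satisfies P^E(e) > 0 for all e ∈ E, and let B be a finite set with |B| = M. For any ensemble (f_x : A → B)_{x∈X} of functions over a finite probability space (X,w), E_X [ I'(f_X(A)|E|P^{AE}) ] ≤ log( 1 + M · E_X [ d₂(f_X(A):E|P^{AE}‖P^E) ] ) ≤ M · E_X [ d₂(f_X(A):E|P^{AE}‖P^E) ]. -/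
open scoped BigOperators

open Classical in
/-- Pushforward `P^{f(A),E}(b,e) = Σ_{a : f(a)=b} P^{AE}(a,e)`. -/
noncomputable def push {A B E : Type*} [Fintype A] (f : A → B) (P : A × E → ℝ)
    (b : B) (e : E) : ℝ :=
  ∑ a, if f a = b then P (a, e) else 0

/-!
Write `M = |B|`, `q = P^E` and `Q_x = P^{f_x(A),E}`. Expanding the square and using that `Q_x` has
marginal `q` gives `1 + M d₂(Q_x) = Σ_{b,e} Q_x(b,e) · (M Q_x(b,e)/q(e))`, so the middle term of the
theorem is the logarithm of the average of `t = M Q_x/q` against the probability weights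
`w(x) Q_x(b,e)`, while its left side is the average of `log t`. Jensen's inequality for the concave
logarithm gives the first inequality, and `log y ≤ y - 1` the second.
-/

open Finset Real

theorem sum_mul_log_le_log_sum_mul {ι : Type*} [Fintype ι] {r t : ι → ℝ}
    (hr0 : ∀ i, 0 ≤ r i) (hr1 : ∑ i, r i = 1) (ht : ∀ i, r i ≠ 0 → 0 < t i) :
    ∑ i, r i * log (t i) ≤ log (∑ i, r i * t i) := by
  classical
  have hsupp : ∀ g : ι → ℝ, ∑ i with r i ≠ 0, r i * g i = ∑ i, r i * g i := fun g =>
    sum_filter_of_ne fun _ _ h => left_ne_zero_of_mul h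
  have hjensen := strictConcaveOn_log_Ioi.concaveOn.le_map_sum (t := univ.filter (r · ≠ 0))
    (fun i _ => hr0 i) (by rw [sum_filter_ne_zero, hr1])
    (fun i hi => Set.mem_Ioi.2 (ht i (mem_filter.1 hi).2))
  simpa only [smul_eq_mul, hsupp] using hjensen

theorem sum_mul_sum_sum_mul_log_le {X B E : Type*} [Fintype X] [Fintype B] [Fintype E]
    {w : X → ℝ} {R t : X → B → E → ℝ} (hw0 : ∀ x, 0 ≤ w x) (hw1 : ∑ x, w x = 1)
    (hR0 : ∀ x b e, 0 ≤ R x b e) (hR1 : ∀ x, ∑ b, ∑ e, R x b e = 1)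
    (ht : ∀ x b e, R x b e ≠ 0 → 0 < t x b e) :
    ∑ x, w x * ∑ b, ∑ e, R x b e * log (t x b e) ≤
      log (∑ x, w x * ∑ b, ∑ e, R x b e * t x b e) := by
  have hflat : ∀ g : X → B → E → ℝ, ∑ x, w x * ∑ b, ∑ e, R x b e * g x b e =
      ∑ i : X × B × E, w i.1 * R i.1 i.2.1 i.2.2 * g i.1 i.2.1 i.2.2 := fun g => by
    simp only [Fintype.sum_prod_type, mul_sum, mul_assoc]
  have hmass : ∑ i : X × B × E, w i.1 * R i.1 i.2.1 i.2.2 = 1 := by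
    simpa [hR1, hw1] using (hflat 1).symm
  rw [hflat, hflat]
  exact sum_mul_log_le_log_sum_mul (fun i => mul_nonneg (hw0 _) (hR0 _ _ _)) hmass
    fun i hi => ht _ _ _ (right_ne_zero_of_mul hi)

theorem one_add_card_mul_chiSq_eq {B E : Type*} [Fintype B] [Fintype E] {R : B → E → ℝ}
    {q : E → ℝ} (hR : ∀ e, ∑ b, R b e = q e) (hq1 : ∑ e, q e = 1) (hq : ∀ e, q e ≠ 0) :
    1 + (Fintype.card B : ℝ) * ∑ b, ∑ e, (R b e - q e / Fintype.card B) ^ 2 * (q e)⁻¹ =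
      ∑ b, ∑ e, R b e * (Fintype.card B * R b e / q e) := by
  set M : ℝ := (Fintype.card B : ℝ)
  have hB : Nonempty B := by
    by_contra hB
    rw [not_nonempty_iff] at hB
    simp [← hR] at hq1
  have hM : M ≠ 0 := Nat.cast_ne_zero.2 Fintype.card_ne_zero
  have hmass : ∑ b, ∑ e, R b e = 1 := by rw [sum_comm]; simp only [hR, hq1]
  have hterm : ∀ b e, M * ((R b e - q e / M) ^ 2 * (q e)⁻¹) =
      R b e * (M * R b e / q e) - 2 * R b e + q e / M := fun b e => by
    field_simp [hq e]; ring
  have hspread : ∑ _b : B, ∑ e, q e / M = 1 := by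
    rw [sum_const, card_univ, nsmul_eq_mul, ← sum_div, hq1, mul_one_div_cancel hM]
  simp_rw [mul_sum, hterm]
  simp only [sum_add_distrib, sum_sub_distrib, ← mul_sum, hmass, hspread]
  ring

theorem one_add_card_mul_avg_chiSq_eq {X B E : Type*} [Fintype X] [Fintype B] [Fintype E]
    {w : X → ℝ} (hw1 : ∑ x, w x = 1) {R : X → B → E → ℝ} {q : E → ℝ}
    (hR : ∀ x e, ∑ b, R x b e = q e) (hq1 : ∑ e, q e = 1) (hq : ∀ e, q e ≠ 0) :
    1 + (Fintype.card B : ℝ) *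
        ∑ x, w x * ∑ b, ∑ e, (R x b e - q e / Fintype.card B) ^ 2 * (q e)⁻¹ =
      ∑ x, w x * ∑ b, ∑ e, R x b e * (Fintype.card B * R x b e / q e) := by
  simp_rw [← one_add_card_mul_chiSq_eq (hR _) hq1 hq, mul_add, mul_one, sum_add_distrib, hw1,
    mul_sum, mul_left_comm]

theorem push_nonneg {A B E : Type*} [Fintype A] (f : A → B) {P : A × E → ℝ}
    (hP : ∀ x, 0 ≤ P x) (b : B) (e : E) : 0 ≤ push f P b e := by
  classical
  exact sum_nonneg fun _ _ => ite_nonneg (hP _) le_rfl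

theorem sum_push {A B E : Type*} [Fintype A] [Fintype B] (f : A → B) (P : A × E → ℝ) (e : E) :
    ∑ b, push f P b e = ∑ a, P (a, e) := by
  classical
  unfold push
  rw [sum_comm]
  simp

theorem stmt_10_general {A B E : Type*} [Fintype A] [Fintype B]
    [Fintype E]
    (P : A × E → ℝ) (hP0 : ∀ x, 0 ≤ P x) (hP1 : ∑ x, P x = 1)
    (hPE : ∀ e : E, 0 < ∑ a, P (a, e))
    {X : Type*} [Fintype X] (w : X → ℝ)
    (hw0 : ∀ x, 0 ≤ w x) (hw1 : ∑ x, w x = 1)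
    (f : X → A → B) :
    (∑ x, w x *
        ∑ b : B, ∑ e : E, push (f x) P b e *
          Real.log ((Fintype.card B : ℝ) * push (f x) P b e / (∑ a, P (a, e))) ≤
      Real.log (1 + (Fintype.card B : ℝ) *
        ∑ x, w x *
          ∑ b : B, ∑ e : E,
            (push (f x) P b e - (∑ a, P (a, e)) / (Fintype.card B : ℝ)) ^ 2 *
              (∑ a, P (a, e))⁻¹)) ∧
    (Real.log (1 + (Fintype.card B : ℝ) *
        ∑ x, w x *
          ∑ b : B, ∑ e : E,
            (push (f x) P b e - (∑ a, P (a, e)) / (Fintype.card B : ℝ)) ^ 2 *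
              (∑ a, P (a, e))⁻¹) ≤
      (Fintype.card B : ℝ) *
        ∑ x, w x *
          ∑ b : B, ∑ e : E,
            (push (f x) P b e - (∑ a, P (a, e)) / (Fintype.card B : ℝ)) ^ 2 *
              (∑ a, P (a, e))⁻¹) := by
  have hPE1 : ∑ e, ∑ a, P (a, e) = 1 := by rw [← hP1, Fintype.sum_prod_type, sum_comm]
  have hmass : ∀ x, ∑ b, ∑ e, push (f x) P b e = 1 := fun x => by
    rw [sum_comm]; simp only [sum_push, hPE1]
  have hD := one_add_card_mul_avg_chiSq_eq hw1 (fun x => sum_push (f x) P) hPE1 fun e => (hPE e).ne'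
  refine ⟨?_, log_le_sub_one_of_pos ?_ |>.trans_eq (add_sub_cancel_left _ _)⟩
  · rw [hD]
    refine sum_mul_sum_sum_mul_log_le hw0 hw1 (fun x => push_nonneg (f x) hP0) hmass
      fun x b e h => div_pos (mul_pos ?_ ((push_nonneg (f x) hP0 b e).lt_of_ne' h)) (hPE e)
    exact Nat.cast_pos.2 (Fintype.card_pos_iff.2 ⟨b⟩)
  · refine add_pos_of_pos_of_nonneg one_pos (mul_nonneg (Nat.cast_nonneg _) ?_)
    exact sum_nonneg fun x _ => mul_nonneg (hw0 x) <| sum_nonneg fun b _ => sum_nonneg fun e _ =>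
      mul_nonneg (sq_nonneg _) (inv_nonneg.2 (hPE e).le)

theorem stmt_10 {A B E : Type*} [Fintype A] [Nonempty A] [Fintype B] [Nonempty B]
    [Fintype E] [Nonempty E]
    (P : A × E → ℝ) (hP0 : ∀ x, 0 ≤ P x) (hP1 : ∑ x, P x = 1)
    (hPE : ∀ e : E, 0 < ∑ a, P (a, e))
    {X : Type*} [Fintype X] [Nonempty X] (w : X → ℝ)
    (hw0 : ∀ x, 0 ≤ w x) (hw1 : ∑ x, w x = 1)
    (f : X → A → B) :
    (∑ x, w x *
        ∑ b : B, ∑ e : E, push (f x) P b e *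
          Real.log ((Fintype.card B : ℝ) * push (f x) P b e / (∑ a, P (a, e))) ≤
      Real.log (1 + (Fintype.card B : ℝ) *
        ∑ x, w x *
          ∑ b : B, ∑ e : E,
            (push (f x) P b e - (∑ a, P (a, e)) / (Fintype.card B : ℝ)) ^ 2 *
              (∑ a, P (a, e))⁻¹)) ∧
    (Real.log (1 + (Fintype.card B : ℝ) *
        ∑ x, w x *
          ∑ b : B, ∑ e : E,
            (push (f x) P b e - (∑ a, P (a, e)) / (Fintype.card B : ℝ)) ^ 2 *
              (∑ a, P (a, e))⁻¹) ≤
      (Fintype.card B : ℝ) *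
        ∑ x, w x *
          ∑ b : B, ∑ e : E,
            (push (f x) P b e - (∑ a, P (a, e)) / (Fintype.card B : ℝ)) ^ 2 *
              (∑ a, P (a, e))⁻¹) :=
  stmt_10_general P hP0 hP1 hPE w hw0 hw1 f
end

section
/- Let P^{AE} be a sub-distribution on A × E and B a finite set with |B| = M. Let (f_x : A → B)_{x∈X} be a universal₂ ensemble over a finite probability space (X,w), i.e. Pr_X[f_X(a₁)=f_X(a₂)] ≤ 1/M for all a₁ ≠ a₂. Then for every s ∈ (0, 1/2], E_X [ d₁'(f_X(A)|E|P^{AE}) ] ≤ 3 · M^s · Σ_{e∈E} ( Σ_{a∈A} P^{AE}(a,e)^{1/(1-s)} )^{1-s} = 3·M^s·e^{φ(s|A|E|P^{AE})}. -/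
open scoped BigOperators

/-!
Fix `e`, put `g = P(·, e)`, `r = 1/(1-s)`, `C = Σ_a g(a)^r` and `K = M^s C^(1-s)`, and split `g`
at a threshold `τ` into a heavy part `g₁` (values above `τ`) and a light part `g₂`.
Whatever the hash, the heavy part contributes at most `2 Σ g₁ ≤ 2 τ^(1-r) C` to `d₁'`.
For the light part, universality bounds the expected collision mass, so the expected squared
`ℓ²`-distance of the hashed `g₂` from uniform is at most `Σ g₂² ≤ τ^(2-r) C`; Cauchy–Schwarz
then gives an expected `d₁'` of at most `√(M τ^(2-r) C)`. For `τ = (C/M)^(1-s)` both bounds are `K`.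
-/

open Finset

section Fiber

variable {A B : Type*} [Fintype A]

open Classical in
noncomputable def fiberSum (h : A → B) (g : A → ℝ) (b : B) : ℝ :=
  ∑ a, if h a = b then g a else 0

theorem fiberSum_add (h : A → B) (g₁ g₂ : A → ℝ) (b : B) :
    fiberSum h (g₁ + g₂) b = fiberSum h g₁ b + fiberSum h g₂ b := by
  simp only [fiberSum, ← sum_add_distrib, Pi.add_apply]
  exact sum_congr rfl fun a _ => by split_ifs <;> simp

theorem fiberSum_nonneg (h : A → B) {g : A → ℝ} (hg : 0 ≤ g) (b : B) : 0 ≤ fiberSum h g b :=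
  sum_nonneg fun a _ => by split_ifs; exacts [hg a, le_rfl]

variable [Fintype B]

/-- `d₁'(h(A)|E|P)` restricted to a single `e`, with `g = P(·, e)`. -/
noncomputable def fiberDev (h : A → B) (g : A → ℝ) : ℝ :=
  ∑ b, |fiberSum h g b - (∑ a, g a) / Fintype.card B|

theorem sum_fiberSum (h : A → B) (g : A → ℝ) : ∑ b, fiberSum h g b = ∑ a, g a := by
  classical
  simp only [fiberSum]
  rw [sum_comm]
  simp

open Classical in
theorem sum_fiberSum_sq (h : A → B) (g : A → ℝ) :
    ∑ b, fiberSum h g b ^ 2 = ∑ a, ∑ a', if h a = h a' then g a * g a' else 0 := by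
  simp only [fiberSum, sq, sum_mul_sum]
  rw [sum_comm]
  refine sum_congr rfl fun a _ => ?_
  rw [sum_comm]
  refine sum_congr rfl fun a' _ => ?_
  simp only [ite_mul, mul_ite, mul_zero, zero_mul]
  rw [sum_ite_eq]
  simp

theorem fiberDev_add_le (h : A → B) (g₁ g₂ : A → ℝ) :
    fiberDev h (g₁ + g₂) ≤ fiberDev h g₁ + fiberDev h g₂ := by
  simp only [fiberDev, ← sum_add_distrib]
  refine sum_le_sum fun b _ => ?_
  rw [fiberSum_add]
  simp only [Pi.add_apply, sum_add_distrib, add_div]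
  rw [add_sub_add_comm]
  exact abs_add_le _ _

theorem sq_fiberDev_le (h : A → B) (g : A → ℝ) :
    fiberDev h g ^ 2 ≤
      Fintype.card B * ∑ b, (fiberSum h g b - (∑ a, g a) / Fintype.card B) ^ 2 := by
  simpa only [fiberDev, sq_abs, card_univ] using
    sq_sum_le_card_mul_sum_sq (s := univ)
      (f := fun b => |fiberSum h g b - (∑ a, g a) / Fintype.card B|)

variable [Nonempty B]

theorem fiberDev_le_two_mul_sum (h : A → B) {g : A → ℝ} (hg : 0 ≤ g) :
    fiberDev h g ≤ 2 * ∑ a, g a := by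
  have hM : (Fintype.card B : ℝ) ≠ 0 := by positivity
  have hmean : 0 ≤ (∑ a, g a) / Fintype.card B :=
    div_nonneg (sum_nonneg fun a _ => hg a) (Nat.cast_nonneg _)
  calc fiberDev h g ≤ ∑ b, (fiberSum h g b + (∑ a, g a) / Fintype.card B) :=
        sum_le_sum fun b _ => abs_sub_le_iff.2
          ⟨by linarith [fiberSum_nonneg h hg b], by linarith [fiberSum_nonneg h hg b]⟩
    _ = 2 * ∑ a, g a := by
        rw [sum_add_distrib, sum_fiberSum, sum_const, card_univ, nsmul_eq_mul,
          mul_div_cancel₀ _ hM]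
        ring

theorem sum_sq_fiberSum_sub_mean (h : A → B) (g : A → ℝ) :
    ∑ b, (fiberSum h g b - (∑ a, g a) / Fintype.card B) ^ 2 =
      ∑ b, fiberSum h g b ^ 2 - (∑ a, g a) ^ 2 / Fintype.card B := by
  have hM : (Fintype.card B : ℝ) ≠ 0 := by positivity
  simp only [sub_sq, sum_add_distrib, sum_sub_distrib, ← sum_mul, ← mul_sum, sum_fiberSum,
    sum_const, card_univ, nsmul_eq_mul]
  field_simp
  ring

end Fiber

section Threshold

open Real

theorem le_rpow_mul_rpow_of_lt {τ t r : ℝ} (hτ : 0 < τ) (ht : τ < t) (hr : 1 ≤ r) :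
    t ≤ τ ^ (1 - r) * t ^ r := by
  have ht0 : 0 < t := hτ.trans ht
  calc t = t ^ (1 - r) * t ^ r := by rw [← rpow_add ht0, sub_add_cancel, rpow_one]
    _ ≤ τ ^ (1 - r) * t ^ r :=
        mul_le_mul_of_nonneg_right (rpow_le_rpow_of_nonpos hτ ht.le (sub_nonpos.2 hr))
          (rpow_nonneg ht0.le r)

theorem sq_le_rpow_mul_rpow_of_le {τ t r : ℝ} (ht0 : 0 ≤ t) (ht : t ≤ τ) (hr : r ≤ 2) :
    t ^ 2 ≤ τ ^ (2 - r) * t ^ r := by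
  calc t ^ 2 = t ^ (2 - r) * t ^ r := by
        rw [← rpow_add' ht0 (by norm_num), sub_add_cancel, rpow_two]
    _ ≤ τ ^ (2 - r) * t ^ r := by gcongr

theorem exists_threshold {C M s : ℝ} (hC : 0 ≤ C) (hM : 0 < M) (hs : s < 1) :
    ∃ τ > 0, τ ^ (1 - 1 / (1 - s)) * C ≤ M ^ s * C ^ (1 - s) ∧
      M * (τ ^ (2 - 1 / (1 - s)) * C) ≤ (M ^ s * C ^ (1 - s)) ^ 2 := by
  have hs' : 1 - s ≠ 0 := by linarith
  rcases hC.eq_or_lt with rfl | hC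
  · exact ⟨1, one_pos, by simp [zero_rpow hs'], by simp [zero_rpow hs']⟩
  have hCM : 0 < C / M := by positivity
  refine ⟨(C / M) ^ (1 - s), by positivity, le_of_eq ?_, le_of_eq ?_⟩
  · refine log_injOn_pos (Set.mem_Ioi.2 (by positivity)) (Set.mem_Ioi.2 (by positivity)) ?_
    rw [← rpow_mul hCM.le, log_mul (by positivity) hC.ne', log_rpow hCM, log_div hC.ne' hM.ne',
      log_mul (by positivity) (by positivity), log_rpow hM, log_rpow hC]
    field_simp
    ring
  · refine log_injOn_pos (Set.mem_Ioi.2 (by positivity)) (Set.mem_Ioi.2 (by positivity)) ?_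
    rw [← rpow_mul hCM.le, log_mul hM.ne' (by positivity), log_mul (by positivity) hC.ne',
      log_rpow hCM, log_div hC.ne' hM.ne', log_pow, log_mul (by positivity) (by positivity),
      log_rpow hM, log_rpow hC]
    push_cast
    field_simp
    ring

variable {A : Type*} [Fintype A] {g : A → ℝ} {τ r : ℝ}

theorem sum_heavy_le (hg : 0 ≤ g) (hτ : 0 < τ) (hr : 1 ≤ r) :
    ∑ a, (if τ < g a then g a else 0) ≤ τ ^ (1 - r) * ∑ a, g a ^ r := by
  rw [mul_sum]
  refine sum_le_sum fun a _ => ?_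
  split_ifs with h
  · exact le_rpow_mul_rpow_of_lt hτ h hr
  · exact mul_nonneg (rpow_nonneg hτ.le _) (rpow_nonneg (hg a) _)

theorem sum_light_sq_le (hg : 0 ≤ g) (hτ : 0 ≤ τ) (hr : r ≤ 2) :
    ∑ a, (if τ < g a then 0 else g a) ^ 2 ≤ τ ^ (2 - r) * ∑ a, g a ^ r := by
  rw [mul_sum]
  refine sum_le_sum fun a _ => ?_
  split_ifs with h
  · rw [zero_pow two_ne_zero]
    exact mul_nonneg (rpow_nonneg hτ _) (rpow_nonneg (hg a) _)
  · exact sq_le_rpow_mul_rpow_of_le (hg a) (not_lt.1 h) hr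

end Threshold

section Universal

variable {A B X : Type*} [Fintype B] [Fintype X] {w : X → ℝ} {f : X → A → B}

def IsUniversal₂ (w : X → ℝ) (f : X → A → B) : Prop :=
  ∀ a₁ a₂ : A, a₁ ≠ a₂ → prOf w (fun x => f x a₁ = f x a₂) ≤ (Fintype.card B : ℝ)⁻¹

theorem prOf_collision_le [DecidableEq A] (hw1 : ∑ x, w x = 1) (huniv : IsUniversal₂ w f)
    (a a' : A) :
    prOf w (fun x => f x a = f x a') ≤ (if a = a' then 1 else 0) + (Fintype.card B : ℝ)⁻¹ := by
  split_ifs with h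
  · subst h
    simp only [prOf, if_true, hw1]
    linarith [inv_nonneg.2 (Nat.cast_nonneg (α := ℝ) (Fintype.card B))]
  · rw [zero_add]
    exact huniv a a' h

variable [Fintype A]

theorem expect_sum_fiberSum_sq_le (hw1 : ∑ x, w x = 1) (huniv : IsUniversal₂ w f)
    {g : A → ℝ} (hg : 0 ≤ g) :
    ∑ x, w x * ∑ b, fiberSum (f x) g b ^ 2 ≤
      ∑ a, g a ^ 2 + (∑ a, g a) ^ 2 / Fintype.card B := by
  classical
  calc ∑ x, w x * ∑ b, fiberSum (f x) g b ^ 2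
      = ∑ a, ∑ a', prOf w (fun x => f x a = f x a') * (g a * g a') := by
        simp only [sum_fiberSum_sq, mul_sum, prOf, sum_mul]
        rw [sum_comm]
        refine sum_congr rfl fun a _ => ?_
        rw [sum_comm]
        refine sum_congr rfl fun a' _ => sum_congr rfl fun x _ => ?_
        split_ifs <;> ring
    _ ≤ ∑ a, ∑ a', ((if a = a' then 1 else 0) + (Fintype.card B : ℝ)⁻¹) * (g a * g a') := by
        gcongr with a _ a' _
        · exact mul_nonneg (hg a) (hg a')
        · exact prOf_collision_le hw1 huniv a a'
    _ = ∑ a, g a ^ 2 + (∑ a, g a) ^ 2 / Fintype.card B := by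
        simp only [add_mul, sum_add_distrib, ite_mul, one_mul, zero_mul, sum_ite_eq,
          mem_univ, if_true, ← mul_sum, ← sum_mul, sq]
        ring

variable [Nonempty B]

theorem expect_sum_sq_fiberSum_sub_mean_le (hw1 : ∑ x, w x = 1) (huniv : IsUniversal₂ w f)
    {g : A → ℝ} (hg : 0 ≤ g) :
    ∑ x, w x * ∑ b, (fiberSum (f x) g b - (∑ a, g a) / Fintype.card B) ^ 2 ≤ ∑ a, g a ^ 2 := by
  simp only [sum_sq_fiberSum_sub_mean, mul_sub, sum_sub_distrib, ← sum_mul, hw1, one_mul]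
  linarith [expect_sum_fiberSum_sq_le hw1 huniv hg]

theorem sq_expect_fiberDev_le (hw0 : ∀ x, 0 ≤ w x) (hw1 : ∑ x, w x = 1) (huniv : IsUniversal₂ w f)
    {g : A → ℝ} (hg : 0 ≤ g) :
    (∑ x, w x * fiberDev (f x) g) ^ 2 ≤ Fintype.card B * ∑ a, g a ^ 2 := by
  calc (∑ x, w x * fiberDev (f x) g) ^ 2
      ≤ (∑ x, w x) * ∑ x, w x * fiberDev (f x) g ^ 2 :=
        sum_sq_le_sum_mul_sum_of_sq_le_mul _ (fun x _ => hw0 x)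
          (fun x _ => mul_nonneg (hw0 x) (sq_nonneg _)) (fun x _ => le_of_eq (by ring))
    _ ≤ ∑ x, w x * (Fintype.card B *
          ∑ b, (fiberSum (f x) g b - (∑ a, g a) / Fintype.card B) ^ 2) := by
        rw [hw1, one_mul]
        gcongr with x
        · exact hw0 x
        · exact sq_fiberDev_le (f x) g
    _ ≤ Fintype.card B * ∑ a, g a ^ 2 := by
        simp only [mul_left_comm (w _), ← mul_sum]
        gcongr
        exact expect_sum_sq_fiberSum_sub_mean_le hw1 huniv hg

theorem expect_fiberDev_le (hw0 : ∀ x, 0 ≤ w x) (hw1 : ∑ x, w x = 1) (huniv : IsUniversal₂ w f)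
    {g : A → ℝ} (hg : 0 ≤ g) {τ r K : ℝ} (hτ : 0 < τ) (hr₁ : 1 ≤ r) (hr₂ : r ≤ 2) (hK : 0 ≤ K)
    (hheavy : τ ^ (1 - r) * ∑ a, g a ^ r ≤ K)
    (hlight : Fintype.card B * (τ ^ (2 - r) * ∑ a, g a ^ r) ≤ K ^ 2) :
    ∑ x, w x * fiberDev (f x) g ≤ 3 * K := by
  set g₁ : A → ℝ := fun a => if τ < g a then g a else 0
  set g₂ : A → ℝ := fun a => if τ < g a then 0 else g a
  have hsplit : g = g₁ + g₂ := funext fun a => by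
    simp only [g₁, g₂, Pi.add_apply]
    split_ifs <;> simp
  have hg₁ : 0 ≤ g₁ := fun a => by simp only [g₁]; split_ifs; exacts [hg a, le_rfl]
  have hg₂ : 0 ≤ g₂ := fun a => by simp only [g₂]; split_ifs; exacts [le_rfl, hg a]
  have heavy : ∑ x, w x * fiberDev (f x) g₁ ≤ 2 * K :=
    calc ∑ x, w x * fiberDev (f x) g₁ ≤ ∑ x, w x * (2 * ∑ a, g₁ a) := by
          gcongr with x
          · exact hw0 x
          · exact fiberDev_le_two_mul_sum (f x) hg₁
      _ = 2 * ∑ a, g₁ a := by rw [← sum_mul, hw1, one_mul]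
      _ ≤ 2 * K := by linarith [sum_heavy_le hg hτ hr₁]
  have light : ∑ x, w x * fiberDev (f x) g₂ ≤ K := by
    refine le_of_pow_le_pow_left₀ two_ne_zero hK
      ((sq_expect_fiberDev_le hw0 hw1 huniv hg₂).trans ?_)
    exact (mul_le_mul_of_nonneg_left (sum_light_sq_le hg hτ.le hr₂) (by positivity)).trans hlight
  calc ∑ x, w x * fiberDev (f x) g
      ≤ ∑ x, w x * (fiberDev (f x) g₁ + fiberDev (f x) g₂) := by
        rw [hsplit]
        gcongr with x
        · exact hw0 x
        · exact fiberDev_add_le (f x) g₁ g₂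
    _ ≤ 3 * K := by
        simp only [mul_add, sum_add_distrib]
        linarith

end Universal

theorem stmt_13_general {A B E : Type*} [Fintype A] [Fintype B] [Nonempty B]
    [Fintype E]
    (P : A × E → ℝ) (hP0 : ∀ x, 0 ≤ P x)
    {X : Type*} [Fintype X] (w : X → ℝ)
    (hw0 : ∀ x, 0 ≤ w x) (hw1 : ∑ x, w x = 1)
    (f : X → A → B)
    (huniv : ∀ a₁ a₂ : A, a₁ ≠ a₂ →
      prOf w (fun x => f x a₁ = f x a₂) ≤ (Fintype.card B : ℝ)⁻¹)
    (s : ℝ) (hs0 : 0 < s) (hs1 : s ≤ 1 / 2) :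
    ∑ x, w x *
        ∑ b : B, ∑ e : E, |push (f x) P b e - (∑ a, P (a, e)) / (Fintype.card B : ℝ)| ≤
      3 * (Fintype.card B : ℝ) ^ s *
        ∑ e : E, (∑ a : A, P (a, e) ^ (1 / (1 - s))) ^ (1 - s) := by
  have hM : (0 : ℝ) < Fintype.card B := by positivity
  have hr₁ : 1 ≤ 1 / (1 - s) := by rw [le_div_iff₀ (by linarith)]; linarith
  have hr₂ : 1 / (1 - s) ≤ 2 := by rw [div_le_iff₀ (by linarith)]; linarith
  calc ∑ x, w x *
        ∑ b : B, ∑ e : E, |push (f x) P b e - (∑ a, P (a, e)) / (Fintype.card B : ℝ)|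
      = ∑ e, ∑ x, w x * fiberDev (f x) (fun a => P (a, e)) := by
        simp only [fiberDev, mul_sum]
        conv_rhs => rw [sum_comm]
        exact sum_congr rfl fun x _ => sum_comm
    _ ≤ ∑ e, 3 * ((Fintype.card B : ℝ) ^ s *
          (∑ a : A, P (a, e) ^ (1 / (1 - s))) ^ (1 - s)) := by
        refine sum_le_sum fun e _ => ?_
        have hC : 0 ≤ ∑ a : A, P (a, e) ^ (1 / (1 - s)) :=
          sum_nonneg fun a _ => Real.rpow_nonneg (hP0 (a, e)) _
        obtain ⟨τ, hτ, hheavy, hlight⟩ := exists_threshold hC hM (by linarith : s < 1)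
        exact expect_fiberDev_le hw0 hw1 huniv (fun a => hP0 (a, e)) hτ hr₁ hr₂
          (by positivity) hheavy hlight
    _ = 3 * (Fintype.card B : ℝ) ^ s *
          ∑ e : E, (∑ a : A, P (a, e) ^ (1 / (1 - s))) ^ (1 - s) := by
        rw [mul_sum]
        simp only [mul_assoc]

theorem stmt_13 {A B E : Type*} [Fintype A] [Nonempty A] [Fintype B] [Nonempty B]
    [Fintype E] [Nonempty E]
    (P : A × E → ℝ) (hP0 : ∀ x, 0 ≤ P x) (hP1 : ∑ x, P x ≤ 1)
    {X : Type*} [Fintype X] [Nonempty X] (w : X → ℝ)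
    (hw0 : ∀ x, 0 ≤ w x) (hw1 : ∑ x, w x = 1)
    (f : X → A → B)
    (huniv : ∀ a₁ a₂ : A, a₁ ≠ a₂ →
      prOf w (fun x => f x a₁ = f x a₂) ≤ (Fintype.card B : ℝ)⁻¹)
    (s : ℝ) (hs0 : 0 < s) (hs1 : s ≤ 1 / 2) :
    ∑ x, w x *
        ∑ b : B, ∑ e : E, |push (f x) P b e - (∑ a, P (a, e)) / (Fintype.card B : ℝ)| ≤
      3 * (Fintype.card B : ℝ) ^ s *
        ∑ e : E, (∑ a : A, P (a, e) ^ (1 / (1 - s))) ^ (1 - s) :=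
  stmt_13_general P hP0 w hw0 hw1 f huniv s hs0 hs1
end

section
/- Let P^{AE} be a normalized distribution on A × E with P^E(e) > 0 for all e, and B a finite set with |B| = M ≥ 2. Let (f_x : A → B)_{x∈X} be a universal₂ ensemble over a finite probability space (X,w), i.e. Pr_X[f_X(a₁)=f_X(a₂)] ≤ 1/M for all a₁ ≠ a₂. Then for every s ∈ (0,1], E_X [ I'(f_X(A)|E|P^{AE}) ] ≤ η( M^s · Σ_{a,e} P^{AE}(a,e)^{1+s}·P^E(e)^{-s} , 1 + log M ), where η(x,y) := x·y − x·log x. (Here Σ_{a,e} P^{AE}(a,e)^{1+s} P^E(e)^{-s} = e^{−s·H_{1+s}(A|E|P^{AE})}.) -/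
open scoped BigOperators

/-- `η(x,y) = x·y − x·log x`. -/
noncomputable def eta (x y : ℝ) : ℝ := x * y - x * Real.log x

/-!
Write the left side as `Σ_{a,e} P(a,e) · E_X log (M · P^{f_X(A)E}(f_X a, e) / P^E(e))`.
By universality, `E_X P^{f_X(A)E}(f_X a, e) ≤ P(a,e) + P^E(e)/M`, so Jensen for `log` bounds the
inner expectation by `log (1 + r)` with `r = M · P(a,e) / P^E(e) ∈ (0, M]`. The elementary inequality
`log (1 + r) ≤ η(r^s, 1 + log M)` and Jensen for the concave `η(·, 1 + log M)` with weights `P`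
finish the proof, because `Σ P · r^s = M^s Σ P^{1+s} (P^E)^{-s}`.
-/

open Finset Real

lemma concaveOn_eta (y : ℝ) : ConcaveOn ℝ (Set.Ici 0) (fun x => eta x y) := by
  have hlin : ConcaveOn ℝ (Set.Ici (0 : ℝ)) (fun x => x * y) :=
    (LinearMap.mulRight ℝ y).concaveOn (convex_Ici 0)
  exact hlin.sub convexOn_mul_log

lemma sum_mul_eta_le {ι : Type*} [Fintype ι] {q t : ι → ℝ} (hq0 : ∀ i, 0 ≤ q i)
    (hq1 : ∑ i, q i = 1) (ht : ∀ i, 0 ≤ t i) (y : ℝ) :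
    ∑ i, q i * eta (t i) y ≤ eta (∑ i, q i * t i) y := by
  simpa only [smul_eq_mul] using (concaveOn_eta y).le_map_sum (t := univ)
    (fun i _ => hq0 i) hq1 (fun i _ => Set.mem_Ici.2 (ht i))

lemma sum_mul_log_le_log {ι : Type*} [Fintype ι] {w g : ι → ℝ} {c : ℝ} (hw0 : ∀ i, 0 ≤ w i)
    (hw1 : ∑ i, w i = 1) (hg : ∀ i, 0 < g i) (hc : ∑ i, w i * g i ≤ c) :
    ∑ i, w i * log (g i) ≤ log c := by
  have hjensen := strictConcaveOn_log_Ioi.concaveOn.le_map_sum (t := univ)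
    (fun i _ => hw0 i) hw1 (fun i _ => Set.mem_Ioi.2 (hg i))
  simp only [smul_eq_mul] at hjensen
  obtain ⟨i, -, hi⟩ := exists_ne_zero_of_sum_ne_zero (hw1.trans_ne one_ne_zero)
  have hpos : 0 < ∑ i, w i * g i :=
    sum_pos' (fun j _ => mul_nonneg (hw0 j) (hg j).le)
      ⟨i, mem_univ i, mul_pos ((hw0 i).lt_of_ne' hi) (hg i)⟩
  exact hjensen.trans (log_le_log hpos hc)

lemma log_one_add_le_eta_rpow {M s r : ℝ} (hM : 1 ≤ M) (hs0 : 0 ≤ s) (hs1 : s ≤ 1)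
    (hr : 0 < r) (hrM : r ≤ M) :
    log (1 + r) ≤ eta (r ^ s) (1 + log M) := by
  have hlogM : 0 ≤ log M := log_nonneg hM
  rw [eta, log_rpow hr]
  rcases le_total r 1 with hr1 | hr1
  · have hlog1 : log (1 + r) ≤ r := by
      linarith [log_le_sub_one_of_pos (show 0 < 1 + r by linarith)]
    have hrs : r ≤ r ^ s := by
      simpa using rpow_le_rpow_of_exponent_ge hr hr1 hs1
    have hlogr : log r ≤ 0 := log_nonpos hr.le hr1
    nlinarith [rpow_pos_of_pos hr s, mul_nonneg hs0 (neg_nonneg.2 hlogr)]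
  · -- with `u = s log r ∈ [0, log M]`: `e^u (c - u) ≥ (1 + u)(c - u) ≥ c` for `c = 1 + log M`
    set u := s * log r
    have hu0 : 0 ≤ u := mul_nonneg hs0 (log_nonneg hr1)
    have huM : u ≤ log M := by
      nlinarith [log_le_log hr hrM, log_nonneg hr1]
    have hrs : r ^ s = exp u := by rw [rpow_def_of_pos hr, mul_comm]
    have hlog1 : log (1 + r) ≤ 1 + log M := by
      calc log (1 + r) ≤ log (exp 1 * M) :=
            log_le_log (by linarith) (by nlinarith [add_one_le_exp (1 : ℝ)])
        _ = 1 + log M := by rw [log_mul (exp_pos 1).ne' (by positivity), log_exp]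
    rw [hrs]
    nlinarith [add_one_le_exp u, mul_nonneg hu0 (sub_nonneg.2 huM)]

lemma mul_rpow_div_eq {p q M s : ℝ} (hp : 0 ≤ p) (hq : 0 < q) (hM : 0 ≤ M) (hs : 0 ≤ s) :
    p * (M * p / q) ^ s = M ^ s * (p ^ (1 + s) * q ^ (-s)) := by
  rcases hp.eq_or_lt with rfl | hp
  · simp [zero_rpow (by linarith : (1 : ℝ) + s ≠ 0)]
  · rw [mul_div_assoc, mul_rpow hM (div_nonneg hp.le hq.le), div_rpow hp.le hq.le,
      div_eq_mul_inv, ← rpow_neg hq.le, rpow_add hp 1 s, rpow_one]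
    ring

section Ensemble

variable {A B E X : Type*} [Fintype A] [Fintype X]

lemma sum_push_mul [Fintype B] (f : A → B) (P : A × E → ℝ) (e : E) (g : B → ℝ) :
    ∑ b, push f P b e * g b = ∑ a, P (a, e) * g (f a) := by
  classical
  simp only [push, sum_mul, ite_mul, zero_mul]
  rw [sum_comm]
  simp

lemma sum_mul_sum_push_mul [Fintype B] [Fintype E] (w : X → ℝ) (f : X → A → B) (P : A × E → ℝ)
    (g : X → B → E → ℝ) :
    ∑ x, w x * ∑ b, ∑ e, push (f x) P b e * g x b e =
      ∑ a, ∑ e, P (a, e) * ∑ x, w x * g x (f x a) e := by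
  simp_rw [sum_comm (s := (univ : Finset B)), sum_push_mul, mul_sum, mul_left_comm (w _)]
  rw [sum_comm_cycle]
  exact sum_congr rfl fun a _ => sum_comm

lemma apply_le_push {P : A × E → ℝ} (hP0 : ∀ p, 0 ≤ P p) (f : A → B) (a : A) (e : E) :
    P (a, e) ≤ push f P (f a) e := by
  classical
  simpa [push] using single_le_sum (f := fun a' => if f a' = f a then P (a', e) else 0)
    (fun a' _ => by split_ifs <;> simp [hP0]) (mem_univ a)

lemma sum_mul_push_apply_eq (w : X → ℝ) (f : X → A → B) (P : A × E → ℝ) (a : A) (e : E) :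
    ∑ x, w x * push (f x) P (f x a) e =
      ∑ a', P (a', e) * prOf w (fun x => f x a' = f x a) := by
  classical
  simp only [push, prOf, mul_sum]
  rw [sum_comm]
  refine sum_congr rfl fun a' _ => sum_congr rfl fun x _ => ?_
  split_ifs <;> simp [mul_comm]

lemma sum_mul_push_apply_le {w : X → ℝ} (hw1 : ∑ x, w x = 1) {f : X → A → B}
    {P : A × E → ℝ} (hP0 : ∀ p, 0 ≤ P p) {δ : ℝ} (hδ : 0 ≤ δ)
    (huniv : ∀ a₁ a₂ : A, a₁ ≠ a₂ → prOf w (fun x => f x a₁ = f x a₂) ≤ δ) (a : A) (e : E) :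
    ∑ x, w x * push (f x) P (f x a) e ≤ P (a, e) + δ * ∑ a', P (a', e) := by
  classical
  have hself : prOf w (fun x => f x a = f x a) = 1 := by simp [prOf, hw1]
  rw [sum_mul_push_apply_eq, ← add_sum_erase _ _ (mem_univ a), hself, mul_one, mul_sum]
  gcongr
  calc ∑ a' ∈ univ.erase a, P (a', e) * prOf w (fun x => f x a' = f x a)
      ≤ ∑ a' ∈ univ.erase a, δ * P (a', e) :=
        sum_le_sum fun a' ha' => by
          rw [mul_comm δ]
          exact mul_le_mul_of_nonneg_left (huniv a' a (ne_of_mem_erase ha')) (hP0 _)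
    _ ≤ ∑ a', δ * P (a', e) :=
        sum_le_sum_of_subset_of_nonneg (subset_univ _) fun a' _ _ => mul_nonneg hδ (hP0 _)

lemma sum_mul_log_push_le_eta {w : X → ℝ} (hw0 : ∀ x, 0 ≤ w x) (hw1 : ∑ x, w x = 1)
    {f : X → A → B} {P : A × E → ℝ} (hP0 : ∀ p, 0 ≤ P p) {M : ℝ} (hM : 1 ≤ M)
    (huniv : ∀ a₁ a₂ : A, a₁ ≠ a₂ → prOf w (fun x => f x a₁ = f x a₂) ≤ M⁻¹)
    {s : ℝ} (hs0 : 0 ≤ s) (hs1 : s ≤ 1) {a : A} {e : E} (ha : 0 < P (a, e)) :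
    ∑ x, w x * log (M * push (f x) P (f x a) e / ∑ a', P (a', e)) ≤
      eta ((M * P (a, e) / ∑ a', P (a', e)) ^ s) (1 + log M) := by
  set Q := ∑ a', P (a', e)
  have hPQ : P (a, e) ≤ Q :=
    single_le_sum (f := fun a' => P (a', e)) (fun a' _ => hP0 (a', e)) (mem_univ a)
  have hQ : 0 < Q := ha.trans_le hPQ
  have hmean : ∑ x, w x * (M * push (f x) P (f x a) e / Q) ≤ 1 + M * P (a, e) / Q :=
    calc ∑ x, w x * (M * push (f x) P (f x a) e / Q)
        = M / Q * ∑ x, w x * push (f x) P (f x a) e := by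
          rw [mul_sum]
          exact sum_congr rfl fun x _ => by ring
      _ ≤ M / Q * (P (a, e) + M⁻¹ * Q) := by
          gcongr
          exact sum_mul_push_apply_le hw1 hP0 (by positivity) huniv a e
      _ = 1 + M * P (a, e) / Q := by
          field_simp
          ring
  calc ∑ x, w x * log (M * push (f x) P (f x a) e / Q) ≤ log (1 + M * P (a, e) / Q) :=
        sum_mul_log_le_log hw0 hw1
          (fun x => by have := ha.trans_le (apply_le_push hP0 (f x) a e); positivity) hmean
    _ ≤ _ := by
        refine log_one_add_le_eta_rpow hM hs0 hs1 (by positivity) ?_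
        rw [div_le_iff₀ hQ]
        exact mul_le_mul_of_nonneg_left hPQ (by linarith)

end Ensemble

theorem stmt_15_general {A B E : Type*} [Fintype A] [Fintype B]
    [Fintype E] (hB : 2 ≤ Fintype.card B)
    (P : A × E → ℝ) (hP0 : ∀ x, 0 ≤ P x) (hP1 : ∑ x, P x = 1)
    (hPE : ∀ e : E, 0 < ∑ a, P (a, e))
    {X : Type*} [Fintype X] (w : X → ℝ)
    (hw0 : ∀ x, 0 ≤ w x) (hw1 : ∑ x, w x = 1)
    (f : X → A → B)
    (huniv : ∀ a₁ a₂ : A, a₁ ≠ a₂ →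
      prOf w (fun x => f x a₁ = f x a₂) ≤ (Fintype.card B : ℝ)⁻¹)
    (s : ℝ) (hs0 : 0 < s) (hs1 : s ≤ 1) :
    ∑ x, w x *
        ∑ b : B, ∑ e : E, push (f x) P b e *
          Real.log ((Fintype.card B : ℝ) * push (f x) P b e / (∑ a, P (a, e))) ≤
      eta ((Fintype.card B : ℝ) ^ s *
          ∑ a : A, ∑ e : E, P (a, e) ^ (1 + s) * (∑ a', P (a', e)) ^ (-s))
        (1 + Real.log (Fintype.card B : ℝ)) := by
  set M : ℝ := (Fintype.card B : ℝ)
  have hM : 1 ≤ M := by simp only [M]; exact_mod_cast one_le_two.trans hB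
  set c := 1 + log M
  set t : A × E → ℝ := fun p => (M * P p / ∑ a, P (a, p.2)) ^ s
  have hpoint : ∀ a e, P (a, e) * ∑ x, w x * log (M * push (f x) P (f x a) e / ∑ a', P (a', e))
      ≤ P (a, e) * eta (t (a, e)) c := by
    intro a e
    rcases (hP0 (a, e)).eq_or_lt with h0 | h0
    · simp [← h0]
    exact mul_le_mul_of_nonneg_left
      (sum_mul_log_push_le_eta hw0 hw1 hP0 hM huniv hs0.le hs1 h0) h0.le
  calc _ = ∑ a, ∑ e, P (a, e) * ∑ x, w x * log (M * push (f x) P (f x a) e / ∑ a', P (a', e)) :=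
        sum_mul_sum_push_mul w f P fun x b e => log (M * push (f x) P b e / ∑ a, P (a, e))
    _ ≤ ∑ a, ∑ e, P (a, e) * eta (t (a, e)) c :=
        sum_le_sum fun a _ => sum_le_sum fun e _ => hpoint a e
    _ = ∑ p, P p * eta (t p) c := by rw [Fintype.sum_prod_type]
    _ ≤ eta (∑ p, P p * t p) c := sum_mul_eta_le hP0 hP1
        (fun p => rpow_nonneg (div_nonneg (mul_nonneg (by linarith) (hP0 p)) (hPE p.2).le) s) c
    _ = _ := by
        rw [Fintype.sum_prod_type, mul_sum]
        simp_rw [mul_sum]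
        congr! 3 with a _ e _
        exact mul_rpow_div_eq (hP0 _) (hPE e) (by linarith) hs0.le

theorem stmt_15 {A B E : Type*} [Fintype A] [Nonempty A] [Fintype B]
    [Fintype E] [Nonempty E] (hB : 2 ≤ Fintype.card B)
    (P : A × E → ℝ) (hP0 : ∀ x, 0 ≤ P x) (hP1 : ∑ x, P x = 1)
    (hPE : ∀ e : E, 0 < ∑ a, P (a, e))
    {X : Type*} [Fintype X] [Nonempty X] (w : X → ℝ)
    (hw0 : ∀ x, 0 ≤ w x) (hw1 : ∑ x, w x = 1)
    (f : X → A → B)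
    (huniv : ∀ a₁ a₂ : A, a₁ ≠ a₂ →
      prOf w (fun x => f x a₁ = f x a₂) ≤ (Fintype.card B : ℝ)⁻¹)
    (s : ℝ) (hs0 : 0 < s) (hs1 : s ≤ 1) :
    ∑ x, w x *
        ∑ b : B, ∑ e : E, push (f x) P b e *
          Real.log ((Fintype.card B : ℝ) * push (f x) P b e / (∑ a, P (a, e))) ≤
      eta ((Fintype.card B : ℝ) ^ s *
          ∑ a : A, ∑ e : E, P (a, e) ^ (1 + s) * (∑ a', P (a', e)) ^ (-s))
        (1 + Real.log (Fintype.card B : ℝ)) :=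
  stmt_15_general hB P hP0 hP1 hPE w hw0 hw1 f huniv s hs0 hs1
end

section
/- Let P^{AE} be a normalized distribution on A × E with P^E(e) > 0 for all e, and let R ∈ ℝ. Define e_φ(R) := sup over t ∈ [0, 1/2] of ( −φ(t|A|E|P^{AE}) − t·R ) where φ(0) := 0, and e_H(R) := sup over s ∈ [0, 1] of ( −log Σ_{a,e} P^{AE}(a,e)^{1+s}·P^E(e)^{-s} − s·R ). Then (1/2)·e_H(R) ≤ e_φ(R) and e_φ(R) ≤ e_H(R). -/
/-!
Fix `e` and write `v = P(·, e)`, `S = ∑ₐ v a`. Weighted Hölder with weights `v`, applied to `v ^ r`,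
bounds the moment `∑ₐ v a ^ (1 + r)` through a higher one; with suitable exponents it gives
`S ^ (-t) ∑ₐ v a ^ (1 + t) ≤ ‖v‖_{1/(1-t)}` and `‖v‖_{1/(1-t)} ^ 2 ≤ S ^ (1 - 2t) ∑ₐ v a ^ (1 + 2t)`.
Summing over `e` (with Cauchy–Schwarz and `∑ₑ S = 1` for the second) yields
`renyiSum P t ≤ phiSum P t` and `phiSum P t ^ 2 ≤ renyiSum P (2t)`; taking `-log` turns these
into `e_φ ≤ e_H` and, through `s = 2t`, into `e_H / 2 ≤ e_φ`.
-/

open Finset Real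

section Holder

variable {ι : Type*} (s : Finset ι) {v : ι → ℝ}

theorem sum_rpow_one_add_le (hv : ∀ i, 0 ≤ v i) {r p : ℝ} (hr : 0 ≤ r) (hp : 1 ≤ p) :
    ∑ i ∈ s, v i ^ (1 + r) ≤
      (∑ i ∈ s, v i) ^ (1 - p⁻¹) * (∑ i ∈ s, v i ^ (1 + r * p)) ^ p⁻¹ := by
  have hrp : 0 ≤ r * p := mul_nonneg hr (zero_le_one.trans hp)
  calc ∑ i ∈ s, v i ^ (1 + r) = ∑ i ∈ s, v i * v i ^ r :=
        sum_congr rfl fun i _ => rpow_one_add' (hv i) (by positivity)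
    _ ≤ (∑ i ∈ s, v i) ^ (1 - p⁻¹) * (∑ i ∈ s, v i * (v i ^ r) ^ p) ^ p⁻¹ :=
        inner_le_weight_mul_Lp_of_nonneg s hp v _ hv fun i => rpow_nonneg (hv i) r
    _ = _ := by
        congr 2
        exact sum_congr rfl fun i _ => by
          rw [← rpow_mul (hv i), rpow_one_add' (hv i) (by positivity)]

theorem rpow_neg_mul_sum_rpow_one_add_le (hv : ∀ i, 0 ≤ v i) {t : ℝ} (ht0 : 0 ≤ t) (ht1 : t < 1)
    (hS : 0 < ∑ i ∈ s, v i) :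
    (∑ i ∈ s, v i) ^ (-t) * ∑ i ∈ s, v i ^ (1 + t) ≤ (∑ i ∈ s, v i ^ (1 / (1 - t))) ^ (1 - t) := by
  have h1t : 0 < 1 - t := by linarith
  have key := sum_rpow_one_add_le s hv ht0 (p := 1 / (1 - t)) (by rw [le_div_iff₀ h1t]; linarith)
  rw [one_div, inv_inv, sub_sub_cancel, show 1 + t * (1 - t)⁻¹ = (1 - t)⁻¹ by field_simp; ring]
    at key
  rw [rpow_neg hS.le, inv_mul_le_iff₀ (rpow_pos_of_pos hS t), one_div]
  exact key

theorem sq_rpow_sum_rpow_le (hv : ∀ i, 0 ≤ v i) {t : ℝ} (ht0 : 0 ≤ t) (ht1 : t ≤ 1 / 2) :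
    ((∑ i ∈ s, v i ^ (1 / (1 - t))) ^ (1 - t)) ^ 2 ≤
      (∑ i ∈ s, v i) ^ (1 - 2 * t) * ∑ i ∈ s, v i ^ (1 + 2 * t) := by
  have h1t : 0 < 1 - t := by linarith
  have hp : 0 < 2 * (1 - t) := by linarith
  have key := sum_rpow_one_add_le s hv (div_nonneg ht0 h1t.le) (p := 2 * (1 - t)) (by linarith)
  rw [show 1 + t / (1 - t) = 1 / (1 - t) by field_simp; ring,
    show 1 + t / (1 - t) * (2 * (1 - t)) = 1 + 2 * t by field_simp] at key
  have hX : 0 ≤ ∑ i ∈ s, v i ^ (1 / (1 - t)) := sum_nonneg fun i _ => rpow_nonneg (hv i) _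
  have hS : 0 ≤ ∑ i ∈ s, v i := sum_nonneg fun i _ => hv i
  have hY : 0 ≤ ∑ i ∈ s, v i ^ (1 + 2 * t) := sum_nonneg fun i _ => rpow_nonneg (hv i) _
  calc ((∑ i ∈ s, v i ^ (1 / (1 - t))) ^ (1 - t)) ^ 2
      = (∑ i ∈ s, v i ^ (1 / (1 - t))) ^ (2 * (1 - t)) := by
        rw [← rpow_natCast, ← rpow_mul hX]; ring_nf
    _ ≤ ((∑ i ∈ s, v i) ^ (1 - (2 * (1 - t))⁻¹) *
          (∑ i ∈ s, v i ^ (1 + 2 * t)) ^ (2 * (1 - t))⁻¹) ^ (2 * (1 - t)) :=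
        rpow_le_rpow hX key hp.le
    _ = (∑ i ∈ s, v i) ^ (1 - 2 * t) * ∑ i ∈ s, v i ^ (1 + 2 * t) := by
        rw [mul_rpow (rpow_nonneg hS _) (rpow_nonneg hY _), ← rpow_mul hS, ← rpow_mul hY,
          inv_mul_cancel₀ hp.ne', rpow_one]
        congr 2
        field_simp
        ring

end Holder

section Sums

variable {A E : Type*} [Fintype A] [Fintype E] (P : A × E → ℝ)

/-- `-log (renyiSum P s) = s * H_{1+s}(A|E|P)` and `log (phiSum P t) = φ(t|A|E|P)`. -/
noncomputable def renyiSum (s : ℝ) : ℝ :=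
  ∑ a, ∑ e, P (a, e) ^ (1 + s) * (∑ a', P (a', e)) ^ (-s)

noncomputable def phiSum (t : ℝ) : ℝ :=
  ∑ e, (∑ a, P (a, e) ^ (1 / (1 - t))) ^ (1 - t)

theorem renyiSum_eq (s : ℝ) :
    renyiSum P s = ∑ e, (∑ a, P (a, e)) ^ (-s) * ∑ a, P (a, e) ^ (1 + s) := by
  rw [renyiSum, sum_comm]
  exact sum_congr rfl fun e _ => by rw [mul_sum]; exact sum_congr rfl fun a _ => mul_comm _ _

theorem renyiSum_le_phiSum (hP0 : ∀ x, 0 ≤ P x) (hPE : ∀ e, 0 < ∑ a, P (a, e)) {t : ℝ}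
    (ht0 : 0 ≤ t) (ht1 : t < 1) : renyiSum P t ≤ phiSum P t := by
  rw [renyiSum_eq]
  exact sum_le_sum fun e _ =>
    rpow_neg_mul_sum_rpow_one_add_le univ (fun a => hP0 (a, e)) ht0 ht1 (hPE e)

theorem sq_phiSum_le_renyiSum (hP0 : ∀ x, 0 ≤ P x) (hP1 : ∑ x, P x = 1)
    (hPE : ∀ e, 0 < ∑ a, P (a, e)) {t : ℝ} (ht0 : 0 ≤ t) (ht1 : t ≤ 1 / 2) :
    phiSum P t ^ 2 ≤ renyiSum P (2 * t) := by
  have hPE1 : ∑ e, ∑ a, P (a, e) = 1 := by rw [← hP1, Fintype.sum_prod_type_right]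
  calc phiSum P t ^ 2
      = (∑ e, (∑ a, P (a, e) ^ (1 / (1 - t))) ^ (1 - t)) ^ 2 / ∑ e, ∑ a, P (a, e) := by
        rw [hPE1, div_one, phiSum]
    _ ≤ ∑ e, ((∑ a, P (a, e) ^ (1 / (1 - t))) ^ (1 - t)) ^ 2 / ∑ a, P (a, e) :=
        sq_sum_div_le_sum_sq_div _ _ fun e _ => hPE e
    _ ≤ ∑ e, (∑ a, P (a, e)) ^ (-(2 * t)) * ∑ a, P (a, e) ^ (1 + 2 * t) := by
        refine sum_le_sum fun e _ => (div_le_iff₀ (hPE e)).2 ?_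
        calc _ ≤ (∑ a, P (a, e)) ^ (1 - 2 * t) * ∑ a, P (a, e) ^ (1 + 2 * t) :=
              sq_rpow_sum_rpow_le univ (fun a => hP0 (a, e)) ht0 ht1
          _ = _ := by
              rw [sub_eq_neg_add, rpow_add_one (hPE e).ne']
              ring
    _ = renyiSum P (2 * t) := (renyiSum_eq P _).symm

theorem le_phiSum (hP0 : ∀ x, 0 ≤ P x) (x : A × E) {t : ℝ} (ht : t < 1) : P x ≤ phiSum P t := by
  obtain ⟨a, e⟩ := x
  have h1t : 0 < 1 - t := by linarith
  have hrow : ∀ e, 0 ≤ ∑ a, P (a, e) ^ (1 / (1 - t)) :=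
    fun e => sum_nonneg fun a _ => rpow_nonneg (hP0 _) _
  calc P (a, e) = (P (a, e) ^ (1 / (1 - t))) ^ (1 - t) := by
        rw [← rpow_mul (hP0 _), one_div_mul_cancel h1t.ne', rpow_one]
    _ ≤ (∑ a, P (a, e) ^ (1 / (1 - t))) ^ (1 - t) :=
        rpow_le_rpow (rpow_nonneg (hP0 _) _)
          (single_le_sum (fun a _ => rpow_nonneg (hP0 (a, e)) _) (mem_univ a)) h1t.le
    _ ≤ phiSum P t :=
        single_le_sum (f := fun e => (∑ a, P (a, e) ^ (1 / (1 - t))) ^ (1 - t))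
          (fun e _ => rpow_nonneg (hrow e) _) (mem_univ e)

end Sums

section Exponents

variable (ψ φ : ℝ → ℝ) (R : ℝ) {c : ℝ}

theorem bddAbove_range_neg_log_sub_mul {b : ℝ} (f : ℝ → ℝ) (hc : 0 < c)
    (hf : ∀ x ∈ Set.Icc 0 b, c ≤ f x) :
    BddAbove (Set.range fun x : Set.Icc (0 : ℝ) b => -log (f x) - x * R) := by
  refine ⟨-log c + b * |R|, ?_⟩
  rintro _ ⟨⟨x, hx0, hxb⟩, rfl⟩
  have hlog := log_le_log hc (hf x ⟨hx0, hxb⟩)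
  have hxR : -(x * R) ≤ b * |R| := by nlinarith [neg_abs_le R, abs_nonneg R]
  dsimp only
  linarith

theorem half_iSup_le_iSup (hc : 0 < c) (hφ : ∀ t ∈ Set.Icc 0 (1 / 2), c ≤ φ t)
    (hA : ∀ t ∈ Set.Icc (0 : ℝ) (1 / 2), φ t ^ 2 ≤ ψ (2 * t)) :
    (1 / 2) * (⨆ s : Set.Icc (0 : ℝ) 1, (-log (ψ s) - s * R)) ≤
      ⨆ t : Set.Icc (0 : ℝ) (1 / 2), (-log (φ t) - t * R) := by
  have : Nonempty (Set.Icc (0 : ℝ) 1) := ⟨⟨0, le_rfl, zero_le_one⟩⟩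
  rw [mul_iSup_of_nonneg (by norm_num)]
  refine ciSup_mono_of_forall_exists (bddAbove_range_neg_log_sub_mul R φ hc hφ)
    fun ⟨s, hs0, hs1⟩ => ⟨⟨s / 2, by linarith, by linarith⟩, ?_⟩
  have ht : s / 2 ∈ Set.Icc (0 : ℝ) (1 / 2) := ⟨by linarith, by linarith⟩
  have hlog := log_le_log (pow_pos (hc.trans_le (hφ _ ht)) 2) (hA _ ht)
  rw [log_pow, mul_div_cancel₀ s two_ne_zero] at hlog
  dsimp only
  push_cast at hlog
  linarith

theorem iSup_le_iSup (hc : 0 < c) (hψ : ∀ s ∈ Set.Icc 0 1, c ≤ ψ s)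
    (hB : ∀ t ∈ Set.Icc (0 : ℝ) (1 / 2), ψ t ≤ φ t) :
    (⨆ t : Set.Icc (0 : ℝ) (1 / 2), (-log (φ t) - t * R)) ≤
      ⨆ s : Set.Icc (0 : ℝ) 1, (-log (ψ s) - s * R) := by
  have : Nonempty (Set.Icc (0 : ℝ) (1 / 2)) := ⟨⟨0, le_rfl, by norm_num⟩⟩
  refine ciSup_mono_of_forall_exists (bddAbove_range_neg_log_sub_mul R ψ hc hψ)
    fun ⟨t, ht0, ht1⟩ => ⟨⟨t, ht0, by linarith⟩, ?_⟩
  have hlog := log_le_log (hc.trans_le (hψ t ⟨ht0, by linarith⟩)) (hB t ⟨ht0, ht1⟩)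
  dsimp only
  linarith

end Exponents

theorem stmt_16_general {A E : Type*} [Fintype A] [Fintype E]
    (P : A × E → ℝ) (hP0 : ∀ x, 0 ≤ P x) (hP1 : ∑ x, P x = 1)
    (hPE : ∀ e : E, 0 < ∑ a, P (a, e)) (R : ℝ) :
    (1 / 2) *
        (⨆ s : Set.Icc (0 : ℝ) 1,
          (- Real.log (∑ a : A, ∑ e : E,
              P (a, e) ^ (1 + (s : ℝ)) * (∑ a', P (a', e)) ^ (-(s : ℝ))) -
            (s : ℝ) * R)) ≤
      (⨆ t : Set.Icc (0 : ℝ) (1 / 2),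
        (- Real.log (∑ e : E,
            (∑ a : A, P (a, e) ^ (1 / (1 - (t : ℝ)))) ^ (1 - (t : ℝ))) -
          (t : ℝ) * R)) ∧
    (⨆ t : Set.Icc (0 : ℝ) (1 / 2),
        (- Real.log (∑ e : E,
            (∑ a : A, P (a, e) ^ (1 / (1 - (t : ℝ)))) ^ (1 - (t : ℝ))) -
          (t : ℝ) * R)) ≤
      (⨆ s : Set.Icc (0 : ℝ) 1,
        (- Real.log (∑ a : A, ∑ e : E,
            P (a, e) ^ (1 + (s : ℝ)) * (∑ a', P (a', e)) ^ (-(s : ℝ))) -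
          (s : ℝ) * R)) := by
  obtain ⟨x, -, hx⟩ := exists_lt_of_sum_lt (f := 0) (s := univ) (g := P) (by simp [hP1])
  have hφ : ∀ t ∈ Set.Icc (0 : ℝ) (1 / 2), P x ≤ phiSum P t :=
    fun t ht => le_phiSum P hP0 x (by linarith [ht.2])
  have hA : ∀ t ∈ Set.Icc (0 : ℝ) (1 / 2), phiSum P t ^ 2 ≤ renyiSum P (2 * t) :=
    fun t ht => sq_phiSum_le_renyiSum P hP0 hP1 hPE ht.1 ht.2
  have hψ : ∀ s ∈ Set.Icc (0 : ℝ) 1, P x ^ 2 ≤ renyiSum P s := fun s ⟨hs0, hs1⟩ => by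
    have ht : s / 2 ∈ Set.Icc (0 : ℝ) (1 / 2) := ⟨by linarith, by linarith⟩
    have h := (pow_le_pow_left₀ hx.le (hφ _ ht) 2).trans (hA _ ht)
    rwa [mul_div_cancel₀ s two_ne_zero] at h
  exact ⟨half_iSup_le_iSup (renyiSum P) (phiSum P) R hx hφ hA,
    iSup_le_iSup (renyiSum P) (phiSum P) R (pow_pos hx 2) hψ
      fun t ht => renyiSum_le_phiSum P hP0 hPE ht.1 (by linarith [ht.2])⟩

theorem stmt_16 {A E : Type*} [Fintype A] [Nonempty A] [Fintype E] [Nonempty E]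
    (P : A × E → ℝ) (hP0 : ∀ x, 0 ≤ P x) (hP1 : ∑ x, P x = 1)
    (hPE : ∀ e : E, 0 < ∑ a, P (a, e)) (R : ℝ) :
    (1 / 2) *
        (⨆ s : Set.Icc (0 : ℝ) 1,
          (- Real.log (∑ a : A, ∑ e : E,
              P (a, e) ^ (1 + (s : ℝ)) * (∑ a', P (a', e)) ^ (-(s : ℝ))) -
            (s : ℝ) * R)) ≤
      (⨆ t : Set.Icc (0 : ℝ) (1 / 2),
        (- Real.log (∑ e : E,
            (∑ a : A, P (a, e) ^ (1 / (1 - (t : ℝ)))) ^ (1 - (t : ℝ))) -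
          (t : ℝ) * R)) ∧
    (⨆ t : Set.Icc (0 : ℝ) (1 / 2),
        (- Real.log (∑ e : E,
            (∑ a : A, P (a, e) ^ (1 / (1 - (t : ℝ)))) ^ (1 - (t : ℝ))) -
          (t : ℝ) * R)) ≤
      (⨆ s : Set.Icc (0 : ℝ) 1,
        (- Real.log (∑ a : A, ∑ e : E,
            P (a, e) ^ (1 + (s : ℝ)) * (∑ a', P (a', e)) ^ (-(s : ℝ))) -
          (s : ℝ) * R)) :=
  stmt_16_general P hP0 hP1 hPE R
end

section
/- Let 𝔽_q be a finite field with q elements, n ≥ 1, B a finite nonempty set, and P^{AB} a normalized distribution on 𝔽_q^n × B. Let (C_x)_{x∈X} be an ensemble, over a finite probability space (X,w), of linear subspaces of 𝔽_q^n of dimension t that is ε-almost universal₂: Pr_X[ a ∈ C_X ] ≤ ε·q^{t−n} for every nonzero a ∈ 𝔽_q^n. For a subspace C define Δ_{a,b}(C) := 1 if there exists a' ∈ (a + C) with a' ≠ a and P^{AB}(a',b) ≥ P^{AB}(a,b), and Δ_{a,b}(C) := 0 otherwise, and set P_e[P^{AB}, C] := Σ_{a,b} P^{AB}(a,b)·Δ_{a,b}(C).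 Then for every s ∈ (0,1], E_X [ P_e[P^{AB}, C_X] ] ≤ ε^s · q^{s(t−n)} · Σ_{b∈B} ( Σ_{a∈𝔽_q^n} P^{AB}(a,b)^{1/(1+s)} )^{1+s}. -/
open scoped BigOperators

open Classical in
/-- The indicator of a decoding error for the pair `(a,b)` with the code `C`. -/
noncomputable def Delta {F : Type*} [Field F] [Fintype F] {n : ℕ} {B : Type*}
    (P : (Fin n → F) × B → ℝ) (C : Submodule F (Fin n → F))
    (a : Fin n → F) (b : B) : ℝ :=
  if ∃ a' : Fin n → F, a' - a ∈ C ∧ a' ≠ a ∧ P (a, b) ≤ P (a', b) then 1 else 0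

/-- Error probability of the MAP decoder within cosets of `C`. -/
noncomputable def Pe {F : Type*} [Field F] [Fintype F] {n : ℕ} {B : Type*} [Fintype B]
    (P : (Fin n → F) × B → ℝ) (C : Submodule F (Fin n → F)) : ℝ :=
  ∑ a : Fin n → F, ∑ b : B, P (a, b) * Delta P C a b

theorem stmt_17 {F : Type*} [Field F] [Fintype F] (n t : ℕ) (hn : 1 ≤ n)
    {B : Type*} [Fintype B] [Nonempty B]
    (P : (Fin n → F) × B → ℝ) (hP0 : ∀ x, 0 ≤ P x) (hP1 : ∑ x, P x = 1)
    {X : Type*} [Fintype X] [Nonempty X] (w : X → ℝ)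
    (hw0 : ∀ x, 0 ≤ w x) (hw1 : ∑ x, w x = 1)
    (C : X → Submodule F (Fin n → F)) (hdim : ∀ x, Module.finrank F (C x) = t)
    (ε : ℝ) (hε : 0 ≤ ε)
    (huniv : ∀ a : Fin n → F, a ≠ 0 →
      prOf w (fun x => a ∈ C x) ≤
        ε * (Fintype.card F : ℝ) ^ t / (Fintype.card F : ℝ) ^ n)
    (s : ℝ) (hs0 : 0 < s) (hs1 : s ≤ 1) :
    ∑ x, w x * Pe P (C x) ≤
      ε ^ s * (Fintype.card F : ℝ) ^ (s * ((t : ℝ) - (n : ℝ))) *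
        ∑ b : B, (∑ a : Fin n → F, P (a, b) ^ (1 / (1 + s))) ^ (1 + s) := by
  classical
  have hq0 : (0:ℝ) < (Fintype.card F : ℝ) := by exact_mod_cast Fintype.card_pos
  set q : ℝ := (Fintype.card F : ℝ) with hqdef
  have hs1' : (0:ℝ) < 1 + s := by linarith
  set α : ℝ := 1 / (1 + s) with hα
  have hα0 : 0 < α := by rw [hα]; exact div_pos one_pos hs1'
  set K : ℝ := ε * q ^ t / q ^ n with hKdef
  have hK0 : 0 ≤ K := by
    rw [hKdef]
    exact div_nonneg (mul_nonneg hε (pow_nonneg hq0.le t)) (pow_nonneg hq0.le n)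
  set T : B → ℝ := fun b => ∑ a : Fin n → F, P (a, b) ^ α with hTdef
  have hT0 : ∀ b, 0 ≤ T b := by
    intro b; rw [hTdef]
    exact Finset.sum_nonneg fun a _ => Real.rpow_nonneg (hP0 _) _
  -- key per-pair bound
  have key : ∀ (a : Fin n → F) (b : B),
      ∑ x, w x * (P (a,b) * Delta P (C x) a b) ≤ P (a,b) ^ α * (K ^ s * T b ^ s) := by
    intro a b
    rcases eq_or_lt_of_le (hP0 (a,b)) with hPz | hPpos
    · have h0 : P (a,b) = 0 := hPz.symm
      simp [h0, Real.zero_rpow hα0.ne']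
    · set r : (Fin n → F) → ℝ := fun a' => (P (a',b) / P (a,b)) ^ α with hrdef
      have hr0 : ∀ a', 0 ≤ r a' := by
        intro a'; rw [hrdef]
        exact Real.rpow_nonneg (div_nonneg (hP0 _) hPpos.le) _
      set S : Submodule F (Fin n → F) → ℝ := fun M =>
        ∑ a' ∈ Finset.univ.filter (fun a' => a' - a ∈ M ∧ a' ≠ a), r a' with hSdef
      have hS0 : ∀ M, 0 ≤ S M := by
        intro M; rw [hSdef]
        exact Finset.sum_nonneg fun _ _ => hr0 _
      -- step 1 : pointwise bound on Delta
      have step1 : ∀ M : Submodule F (Fin n → F), Delta P M a b ≤ S M ^ s := by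
        intro M
        unfold Delta
        split_ifs with h
        · obtain ⟨a', hmem, hne, hle⟩ := h
          have h1 : (1:ℝ) ≤ r a' := by
            have hdiv : (1:ℝ) ≤ P (a',b) / P (a,b) := (one_le_div hPpos).mpr hle
            calc (1:ℝ) = 1 ^ α := (Real.one_rpow α).symm
              _ ≤ r a' := by
                  rw [hrdef]
                  exact Real.rpow_le_rpow zero_le_one hdiv hα0.le
          have h2 : r a' ≤ S M := by
            rw [hSdef]
            exact Finset.single_le_sum (fun i _ => hr0 i) (by simp [hmem, hne])
          calc (1:ℝ) = 1 ^ s := (Real.one_rpow s).symm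
            _ ≤ S M ^ s := Real.rpow_le_rpow zero_le_one (h1.trans h2) hs0.le
        · exact Real.rpow_nonneg (hS0 M) s
      -- step 2 : Jensen's inequality
      have step2 : ∑ x, w x * S (C x) ^ s ≤ (∑ x, w x * S (C x)) ^ s := by
        have h := Real.arith_mean_le_rpow_mean Finset.univ w (fun x => S (C x) ^ s)
          (fun i _ => hw0 i) hw1 (fun i _ => Real.rpow_nonneg (hS0 _) s)
          (p := 1/s) (by rw [le_div_iff₀ hs0]; linarith)
        have heq : ∀ x : X, (S (C x) ^ s) ^ (1/s) = S (C x) := by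
          intro x
          rw [← Real.rpow_mul (hS0 _), mul_one_div, div_self hs0.ne', Real.rpow_one]
        simp only [heq] at h
        rwa [one_div_one_div] at h
      -- step 3 : universality bound
      have step3 : ∑ x, w x * S (C x) ≤ K * ∑ a' : Fin n → F, r a' := by
        have h1 : ∀ x, w x * S (C x)
            = ∑ a' : Fin n → F, (if a' - a ∈ C x ∧ a' ≠ a then w x * r a' else 0) := by
          intro x
          simp only [hSdef, Finset.sum_filter, Finset.mul_sum, mul_ite, mul_zero]
        have hswap : ∑ x, w x * S (C x)
            = ∑ a' : Fin n → F,
                (if a' ≠ a then prOf w (fun x => a' - a ∈ C x) * r a' else 0) := by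
          rw [Finset.sum_congr rfl (fun x _ => h1 x), Finset.sum_comm]
          refine Finset.sum_congr rfl fun a' _ => ?_
          by_cases hne : a' = a
          · simp [hne]
          · rw [if_pos hne, prOf, Finset.sum_mul]
            refine Finset.sum_congr rfl fun x _ => ?_
            by_cases hm : a' - a ∈ C x
            · simp [hm, hne]
            · simp [hm]
        rw [hswap]
        have hbound : ∀ a' : Fin n → F,
            (if a' ≠ a then prOf w (fun x => a' - a ∈ C x) * r a' else 0) ≤ K * r a' := by
          intro a'
          split_ifs with hne
          · exact mul_le_mul_of_nonneg_right (huniv _ (sub_ne_zero_of_ne hne)) (hr0 a')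
          · exact mul_nonneg hK0 (hr0 a')
        calc ∑ a' : Fin n → F,
              (if a' ≠ a then prOf w (fun x => a' - a ∈ C x) * r a' else 0)
            ≤ ∑ a' : Fin n → F, K * r a' := Finset.sum_le_sum fun a' _ => hbound a'
          _ = K * ∑ a' : Fin n → F, r a' := (Finset.mul_sum _ _ _).symm
      -- step 4 : algebra
      have hsum_r : ∑ a' : Fin n → F, r a' = T b / P (a,b) ^ α := by
        have : ∀ a', r a' = P (a',b) ^ α / P (a,b) ^ α := by
          intro a'; rw [hrdef]; exact Real.div_rpow (hP0 _) hPpos.le α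
        rw [Finset.sum_congr rfl (fun a' _ => this a'), ← Finset.sum_div, hTdef]
      have hPa : 0 < P (a,b) ^ α := Real.rpow_pos_of_pos hPpos α
      have hexp : α + α * s = 1 := by
        have hne : (1:ℝ) + s ≠ 0 := hs1'.ne'
        rw [hα]; field_simp
      have hdivP : P (a,b) / P (a,b) ^ (α*s) = P (a,b) ^ α := by
        rw [div_eq_iff (Real.rpow_pos_of_pos hPpos (α*s)).ne',
          ← Real.rpow_add hPpos, hexp, Real.rpow_one]
      calc ∑ x, w x * (P (a,b) * Delta P (C x) a b)
          = P (a,b) * ∑ x, w x * Delta P (C x) a b := by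
            rw [Finset.mul_sum]; exact Finset.sum_congr rfl fun x _ => by ring
        _ ≤ P (a,b) * ∑ x, w x * S (C x) ^ s := by
            refine mul_le_mul_of_nonneg_left ?_ hPpos.le
            exact Finset.sum_le_sum fun x _ => mul_le_mul_of_nonneg_left (step1 _) (hw0 x)
        _ ≤ P (a,b) * (∑ x, w x * S (C x)) ^ s :=
            mul_le_mul_of_nonneg_left step2 hPpos.le
        _ ≤ P (a,b) * (K * ∑ a' : Fin n → F, r a') ^ s := by
            refine mul_le_mul_of_nonneg_left ?_ hPpos.le
            exact Real.rpow_le_rpow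
              (Finset.sum_nonneg fun x _ => mul_nonneg (hw0 x) (hS0 _)) step3 hs0.le
        _ = P (a,b) ^ α * (K ^ s * T b ^ s) := by
            rw [hsum_r, Real.mul_rpow hK0 (div_nonneg (hT0 b) hPa.le),
              Real.div_rpow (hT0 b) hPa.le, ← Real.rpow_mul hPpos.le]
            calc P (a,b) * (K ^ s * (T b ^ s / P (a,b) ^ (α*s)))
                = K ^ s * T b ^ s * (P (a,b) / P (a,b) ^ (α*s)) := by ring
              _ = P (a,b) ^ α * (K ^ s * T b ^ s) := by rw [hdivP]; ring
  -- assemble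
  have hL : ∑ x, w x * Pe P (C x)
      = ∑ a : Fin n → F, ∑ b : B, ∑ x, w x * (P (a,b) * Delta P (C x) a b) := by
    simp only [Pe, Finset.mul_sum]
    rw [Finset.sum_comm]
    exact Finset.sum_congr rfl fun a _ => Finset.sum_comm
  have hmain : ∑ x, w x * Pe P (C x) ≤ K ^ s * ∑ b : B, T b ^ (1 + s) := by
    rw [hL]
    calc ∑ a : Fin n → F, ∑ b : B, ∑ x, w x * (P (a,b) * Delta P (C x) a b)
        ≤ ∑ a : Fin n → F, ∑ b : B, P (a,b) ^ α * (K ^ s * T b ^ s) :=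
          Finset.sum_le_sum fun a _ => Finset.sum_le_sum fun b _ => key a b
      _ = K ^ s * ∑ b : B, T b ^ (1 + s) := by
          rw [Finset.sum_comm, Finset.mul_sum]
          refine Finset.sum_congr rfl fun b _ => ?_
          rw [← Finset.sum_mul]
          have hTb : (∑ a : Fin n → F, P (a,b) ^ α) = T b := by rw [hTdef]
          rw [hTb, Real.rpow_add' (hT0 b) hs1'.ne', Real.rpow_one]
          ring
  have hKs : K ^ s = ε ^ s * q ^ (s * ((t:ℝ) - (n:ℝ))) := by
    have h1 : K = ε * q ^ ((t:ℝ) - (n:ℝ)) := by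
      rw [hKdef, Real.rpow_sub hq0, Real.rpow_natCast, Real.rpow_natCast, mul_div_assoc]
    rw [h1, Real.mul_rpow hε (Real.rpow_nonneg hq0.le _), ← Real.rpow_mul hq0.le,
      mul_comm ((t:ℝ) - (n:ℝ)) s]
  calc ∑ x, w x * Pe P (C x) ≤ K ^ s * ∑ b : B, T b ^ (1 + s) := hmain
    _ = ε ^ s * q ^ (s * ((t:ℝ) - (n:ℝ))) *
        ∑ b : B, (∑ a : Fin n → F, P (a, b) ^ α) ^ (1 + s) := by
        rw [hKs, hTdef]
end
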